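/- arXiv:2211.01973 — 8 statements merged into one kernel-verified Lean document; each statement's English description precedes it below -/
import Mathlib

section
/- Let G : ℝ → ℝ → ℝ be twice differentiable with G_{ee} < 0, G_{vv} < 0, and G_{ee}·G_{vv} > G_{ev}² at every point (concavity of the entropy), and G_e > 0. Define for ρ > 0, m ∈ ℝ, E ∈ ℝ the function q(ρ, m, E) = -ρ·G(E/ρ - m²/(2ρ²), 1/ρ). Then the second partial derivative q_{ρρ} is strictly positive whenever ρ > 0. -/
/-!
Put `v = 1/ρ` and `g(v) = G(E v - m² v² / 2, v)`, so that `q(ρ) = -ρ g(1/ρ)` for fixed `m, E`.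
For any such perspective function `(ρ ↦ ρ g(1/ρ))'' = g''(1/ρ) / ρ³`, so it suffices that
`g'' < 0`. Along the parabola `v ↦ (E v - m² v² / 2, v)`, with tangent
`τ = (E - m² v, 1)` and acceleration `(-m², 0)`, the chain rule gives
`g'' = D²G(τ, τ) - m² G_e`: the first term is negative because the Hessian of `G` is negative
definite, the second is nonpositive because `G_e > 0`.
-/

theorem quadratic_form_neg {A B C x y : ℝ} (hA : A < 0) (hdisc : B ^ 2 < A * C)
    (hxy : (x, y) ≠ 0) : A * x ^ 2 + 2 * B * x * y + C * y ^ 2 < 0 := by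
  rcases eq_or_ne y 0 with rfl | hy
  · have hx : x ≠ 0 := fun hx => hxy (by simp [hx])
    nlinarith [sq_pos_of_ne_zero hx]
  · nlinarith [sq_nonneg (A * x + B * y), mul_pos (sub_pos.mpr hdisc) (sq_pos_of_ne_zero hy)]

namespace ContinuousLinearMap

theorem apply_prod_eq {M : Type*} [AddCommGroup M] [Module ℝ M] [TopologicalSpace M]
    (L : ℝ × ℝ →L[ℝ] M) (x y : ℝ) : L (x, y) = x • L (1, 0) + y • L (0, 1) := by
  rw [← map_smul, ← map_smul, ← map_add]
  simp

theorem apply_prod_apply_prod (B : ℝ × ℝ →L[ℝ] ℝ × ℝ →L[ℝ] ℝ) (x y : ℝ) :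
    B (x, y) (x, y) = B (1, 0) (1, 0) * x ^ 2
      + (B (1, 0) (0, 1) + B (0, 1) (1, 0)) * x * y + B (0, 1) (0, 1) * y ^ 2 := by
  rw [B.apply_prod_eq]
  simp only [add_apply, smul_apply, smul_eq_mul]
  rw [(B (1, 0)).apply_prod_eq, (B (0, 1)).apply_prod_eq]
  simp only [smul_eq_mul]
  ring

end ContinuousLinearMap

section SecondDerivatives

variable {E F : Type*} [NormedAddCommGroup E] [NormedSpace ℝ E]
  [NormedAddCommGroup F] [NormedSpace ℝ F]

theorem HasFDerivAt.hasDerivAt_fst_line {f : ℝ × ℝ → F} {L : ℝ × ℝ →L[ℝ] F} {a b : ℝ}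
    (hf : HasFDerivAt f L (a, b)) : HasDerivAt (fun x => f (x, b)) (L (1, 0)) a :=
  hf.comp_hasDerivAt a ((hasDerivAt_id a).prodMk (hasDerivAt_const a b))

theorem HasFDerivAt.hasDerivAt_snd_line {f : ℝ × ℝ → F} {L : ℝ × ℝ →L[ℝ] F} {a b : ℝ}
    (hf : HasFDerivAt f L (a, b)) : HasDerivAt (fun y => f (a, y)) (L (0, 1)) b :=
  hf.comp_hasDerivAt b ((hasDerivAt_const b a).prodMk (hasDerivAt_id b))

theorem ContDiff.hasFDerivAt_two {f : E → F} (hf : ContDiff ℝ 2 f) (p : E) :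
    HasFDerivAt f (fderiv ℝ f p) p :=
  (hf.differentiable two_ne_zero p).hasFDerivAt

theorem ContDiff.hasFDerivAt_fderiv_two {f : E → F} (hf : ContDiff ℝ 2 f) (p : E) :
    HasFDerivAt (fderiv ℝ f) (fderiv ℝ (fderiv ℝ f) p) p :=
  ((hf.fderiv_right (by norm_num)).differentiable one_ne_zero p).hasFDerivAt

theorem ContDiff.hasDerivAt_deriv_comp {f : E → F} (hf : ContDiff ℝ 2 f) {γ γ' : ℝ → E}
    {γ'' : E} {t : ℝ} (hγ : ∀ s, HasDerivAt γ (γ' s) s) (hγ' : HasDerivAt γ' γ'' t) :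
    HasDerivAt (deriv fun s => f (γ s))
      (fderiv ℝ (fderiv ℝ f) (γ t) (γ' t) (γ' t) + fderiv ℝ f (γ t) γ'') t := by
  have hderiv : (deriv fun s => f (γ s)) = fun s => fderiv ℝ f (γ s) (γ' s) :=
    funext fun s => ((hf.hasFDerivAt_two (γ s)).comp_hasDerivAt s (hγ s)).deriv
  rw [hderiv]
  exact ((hf.hasFDerivAt_fderiv_two (γ t)).comp_hasDerivAt t (hγ t)).clm_apply hγ'

end SecondDerivatives

section Partials

variable {G : ℝ → ℝ → ℝ}

theorem deriv_fst_eq_fderiv_uncurry (hG : ContDiff ℝ 2 (Function.uncurry G)) (e v : ℝ) :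
    deriv (fun x => G x v) e = fderiv ℝ (Function.uncurry G) (e, v) (1, 0) :=
  (hG.hasFDerivAt_two (e, v)).hasDerivAt_fst_line.deriv

theorem deriv_snd_eq_fderiv_uncurry (hG : ContDiff ℝ 2 (Function.uncurry G)) (e v : ℝ) :
    deriv (fun y => G e y) v = fderiv ℝ (Function.uncurry G) (e, v) (0, 1) :=
  (hG.hasFDerivAt_two (e, v)).hasDerivAt_snd_line.deriv

theorem deriv_deriv_fst_eq_fderiv_fderiv_uncurry (hG : ContDiff ℝ 2 (Function.uncurry G))
    (e v : ℝ) : deriv (fun x => deriv (fun y => G y v) x) e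
      = fderiv ℝ (fderiv ℝ (Function.uncurry G)) (e, v) (1, 0) (1, 0) := by
  simp_rw [deriv_fst_eq_fderiv_uncurry hG]
  exact ((hG.hasFDerivAt_fderiv_two (e, v)).hasDerivAt_fst_line.clm_apply
    (hasDerivAt_const e _)).deriv.trans (by simp)

theorem deriv_deriv_snd_eq_fderiv_fderiv_uncurry (hG : ContDiff ℝ 2 (Function.uncurry G))
    (e v : ℝ) : deriv (fun x => deriv (fun y => G e y) x) v
      = fderiv ℝ (fderiv ℝ (Function.uncurry G)) (e, v) (0, 1) (0, 1) := by
  simp_rw [deriv_snd_eq_fderiv_uncurry hG]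
  exact ((hG.hasFDerivAt_fderiv_two (e, v)).hasDerivAt_snd_line.clm_apply
    (hasDerivAt_const v _)).deriv.trans (by simp)

theorem deriv_deriv_fst_snd_eq_fderiv_fderiv_uncurry (hG : ContDiff ℝ 2 (Function.uncurry G))
    (e v : ℝ) : deriv (fun x => deriv (fun y => G y x) e) v
      = fderiv ℝ (fderiv ℝ (Function.uncurry G)) (e, v) (0, 1) (1, 0) := by
  simp_rw [deriv_fst_eq_fderiv_uncurry hG]
  exact ((hG.hasFDerivAt_fderiv_two (e, v)).hasDerivAt_snd_line.clm_apply
    (hasDerivAt_const v _)).deriv.trans (by simp)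

theorem fderiv_fderiv_uncurry_apply_self_neg (hG : ContDiff ℝ 2 (Function.uncurry G))
    (hGee : ∀ e v : ℝ, deriv (fun x => deriv (fun y => G y v) x) e < 0)
    (hconc : ∀ e v : ℝ,
      (deriv (fun x => deriv (fun y => G y x) e) v) ^ 2 <
        (deriv (fun x => deriv (fun y => G y v) x) e) *
        (deriv (fun x => deriv (fun y => G e y) x) v))
    (p : ℝ × ℝ) {w : ℝ × ℝ} (hw : w ≠ 0) :
    fderiv ℝ (fderiv ℝ (Function.uncurry G)) p w w < 0 := by
  obtain ⟨e, v⟩ := p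
  obtain ⟨x, y⟩ := w
  have hsymm := second_derivative_symmetric hG.hasFDerivAt_two
    (hG.hasFDerivAt_fderiv_two (e, v)) (1, 0) (0, 1)
  have hA := hGee e v
  have hdisc := hconc e v
  rw [deriv_deriv_fst_eq_fderiv_fderiv_uncurry hG] at hA hdisc
  rw [deriv_deriv_snd_eq_fderiv_fderiv_uncurry hG,
    deriv_deriv_fst_snd_eq_fderiv_fderiv_uncurry hG] at hdisc
  rw [ContinuousLinearMap.apply_prod_apply_prod, hsymm]
  linarith [quadratic_form_neg hA hdisc hw]

end Partials

theorem ContDiff.hasDerivAt_deriv_comp_parabola {f : ℝ × ℝ → ℝ} (hf : ContDiff ℝ 2 f)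
    (E m t : ℝ) :
    HasDerivAt (deriv fun v => f (E * v - m ^ 2 * v ^ 2 / 2, v))
      (fderiv ℝ (fderiv ℝ f) (E * t - m ^ 2 * t ^ 2 / 2, t) (E - m ^ 2 * t, 1)
          (E - m ^ 2 * t, 1)
        - m ^ 2 * fderiv ℝ f (E * t - m ^ 2 * t ^ 2 / 2, t) (1, 0)) t := by
  have hγ : ∀ v, HasDerivAt (fun v => (E * v - m ^ 2 * v ^ 2 / 2, v)) (E - m ^ 2 * v, 1) v :=
    fun v => (((hasDerivAt_id' v).const_mul E).sub
      (((hasDerivAt_pow 2 v).const_mul (m ^ 2)).div_const 2)).prodMk (hasDerivAt_id' v)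
      |>.congr_deriv (by simp; ring)
  have hγ' : HasDerivAt (fun v => (E - m ^ 2 * v, (1 : ℝ))) (-m ^ 2, 0) t :=
    (((hasDerivAt_id' t).const_mul (m ^ 2)).const_sub E).prodMk (hasDerivAt_const t 1)
      |>.congr_deriv (by simp)
  refine (hf.hasDerivAt_deriv_comp hγ hγ').congr_deriv ?_
  rw [ContinuousLinearMap.apply_prod_eq _ (-m ^ 2), smul_eq_mul, smul_eq_mul, zero_mul,
    add_zero, neg_mul, ← sub_eq_add_neg]

theorem hasDerivAt_deriv_mul_comp_inv {g : ℝ → ℝ} (hg : Differentiable ℝ g) {g'' ρ : ℝ}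
    (hg' : HasDerivAt (deriv g) g'' ρ⁻¹) (hρ : ρ ≠ 0) :
    HasDerivAt (deriv fun r => r * g r⁻¹) (g'' / ρ ^ 3) ρ := by
  have hderiv : ∀ r ≠ 0, deriv (fun r => r * g r⁻¹) r = g r⁻¹ - r⁻¹ * deriv g r⁻¹ := by
    intro r hr
    have hd : HasDerivAt (fun r => r * g r⁻¹) (1 * g r⁻¹ + r * (deriv g r⁻¹ * -(r ^ 2)⁻¹)) r :=
      (hasDerivAt_id' r).mul ((hg r⁻¹).hasDerivAt.comp r (hasDerivAt_inv hr))
    rw [hd.deriv]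
    field_simp
    ring
  have hinv := hasDerivAt_inv hρ
  have hcomp := ((hg ρ⁻¹).hasDerivAt.comp ρ hinv).sub (hinv.mul (hg'.comp ρ hinv))
  refine (hcomp.congr_of_eventuallyEq ?_).congr_deriv ?_
  · filter_upwards [eventually_ne_nhds hρ] with r hr using hderiv r hr
  · simp only [Function.comp_apply]
    field_simp
    ring

theorem qrr_pos_general
    (G : ℝ → ℝ → ℝ)
    (hG : ContDiff ℝ 2 (Function.uncurry G))
    (hGe : ∀ e v : ℝ, 0 < deriv (fun x => G x v) e)
    (hGee : ∀ e v : ℝ, deriv (fun x => deriv (fun y => G y v) x) e < 0)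
    (hconc : ∀ e v : ℝ,
      (deriv (fun x => deriv (fun y => G y x) e) v) ^ 2 <
        (deriv (fun x => deriv (fun y => G y v) x) e) *
        (deriv (fun x => deriv (fun y => G e y) x) v))
    (q : ℝ → ℝ → ℝ → ℝ)
    (hq : ∀ ρ m E : ℝ, q ρ m E = -ρ * G (E / ρ - m ^ 2 / (2 * ρ ^ 2)) (1 / ρ)) :
    ∀ ρ m E : ℝ, 0 < ρ →
      0 < deriv (fun r => deriv (fun r' => q r' m E) r) ρ := by
  intro ρ m E hρ
  set g : ℝ → ℝ := fun v => Function.uncurry G (E * v - m ^ 2 * v ^ 2 / 2, v)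
  have hqg : (fun r => q r m E) = fun r => -(r * g r⁻¹) := by
    funext r
    simp only [hq, g, Function.uncurry_apply_pair]
    ring_nf
  have hGd : Differentiable ℝ (Function.uncurry G) := hG.differentiable two_ne_zero
  have hg : Differentiable ℝ g := by fun_prop
  have hg'' := hasDerivAt_deriv_mul_comp_inv hg (hG.hasDerivAt_deriv_comp_parabola E m ρ⁻¹)
    hρ.ne'
  rw [hqg, deriv.fun_neg', deriv.fun_neg, hg''.deriv, neg_pos]
  have hHess := fderiv_fderiv_uncurry_apply_self_neg hG hGee hconc
    (E * ρ⁻¹ - m ^ 2 * ρ⁻¹ ^ 2 / 2, ρ⁻¹) (w := (E - m ^ 2 * ρ⁻¹, 1)) (by simp)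
  have hGe' := hGe (E * ρ⁻¹ - m ^ 2 * ρ⁻¹ ^ 2 / 2) ρ⁻¹
  rw [deriv_fst_eq_fderiv_uncurry hG] at hGe'
  apply div_neg_of_neg_of_pos _ (by positivity)
  nlinarith [mul_nonneg (sq_nonneg m) hGe'.le]

/-- positivity of `q_ρρ` for `q(ρ,m,E) = -ρ G(E/ρ - m²/(2ρ²), 1/ρ)`
under concavity of the entropy `G` and `G_e > 0`. -/
theorem qrr_pos
    (G : ℝ → ℝ → ℝ)
    (hG : ContDiff ℝ 2 (Function.uncurry G))
    (hGe : ∀ e v : ℝ, 0 < deriv (fun x => G x v) e)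
    (hGee : ∀ e v : ℝ, deriv (fun x => deriv (fun y => G y v) x) e < 0)
    (hGvv : ∀ e v : ℝ, deriv (fun x => deriv (fun y => G e y) x) v < 0)
    (hconc : ∀ e v : ℝ,
      (deriv (fun x => deriv (fun y => G y x) e) v) ^ 2 <
        (deriv (fun x => deriv (fun y => G y v) x) e) *
        (deriv (fun x => deriv (fun y => G e y) x) v))
    (q : ℝ → ℝ → ℝ → ℝ)
    (hq : ∀ ρ m E : ℝ, q ρ m E = -ρ * G (E / ρ - m ^ 2 / (2 * ρ ^ 2)) (1 / ρ)) :
    ∀ ρ m E : ℝ, 0 < ρ →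
      0 < deriv (fun r => deriv (fun r' => q r' m E) r) ρ :=
  qrr_pos_general G hG hGe hGee hconc q hq
end

section
/- Let G : ℝ → ℝ → ℝ be twice differentiable with G_e > 0, G_{ee} < 0, G_{vv} < 0 and G_{ee}G_{vv} > G_{ev}² at every relevant point. Define q(ρ, m, E) = -ρ·G(E/ρ - m²/(2ρ²), 1/ρ) for ρ > 0. Then the 2×2 leading principal minor of the Hessian of q in the variables (ρ, m) is strictly positive: q_{ρρ} q_{mm} - q_{ρm}² > 0. -/
open Real

private noncomputable def P1 (f : ℝ × ℝ → ℝ) (p : ℝ × ℝ) : ℝ := fderiv ℝ f p (1, 0)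
private noncomputable def P2 (f : ℝ × ℝ → ℝ) (p : ℝ × ℝ) : ℝ := fderiv ℝ f p (0, 1)

private lemma chainQ {f : ℝ × ℝ → ℝ} (hf : Differentiable ℝ f)
    {u w : ℝ → ℝ} {u' w' t : ℝ} (hu : HasDerivAt u u' t) (hw : HasDerivAt w w' t) :
    HasDerivAt (fun s => f (u s, w s))
      (u' * P1 f (u t, w t) + w' * P2 f (u t, w t)) t := by
  have h := (hf (u t, w t)).hasFDerivAt.comp_hasDerivAt t (hu.prodMk hw)
  refine h.congr_deriv ?_
  have h2 : (u', w') = u' • ((1:ℝ), (0:ℝ)) + w' • ((0:ℝ), (1:ℝ)) := by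
    simp [Prod.ext_iff]
  rw [h2, map_add, map_smul, map_smul]
  simp [P1, P2, smul_eq_mul]

private lemma pdQ1 {h : ℝ × ℝ → ℝ} (hh : Differentiable ℝ h) (e v : ℝ) :
    HasDerivAt (fun x => h (x, v)) (P1 h (e, v)) e := by
  simpa using chainQ hh (hasDerivAt_id e) (hasDerivAt_const e v)

private lemma pdQ2 {h : ℝ × ℝ → ℝ} (hh : Differentiable ℝ h) (e v : ℝ) :
    HasDerivAt (fun y => h (e, y)) (P2 h (e, v)) v := by
  simpa using chainQ hh (hasDerivAt_const v e) (hasDerivAt_id v)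

private lemma symQ {f : ℝ × ℝ → ℝ} (hf : ContDiff ℝ 2 f) (p : ℝ × ℝ) :
    P2 (P1 f) p = P1 (P2 f) p := by
  have hdf1 : ContDiff ℝ 1 (fderiv ℝ f) := hf.fderiv_right (by norm_num)
  have hdfd : Differentiable ℝ (fderiv ℝ f) := hdf1.differentiable one_ne_zero
  have h1 : HasFDerivAt (P1 f)
      ((ContinuousLinearMap.apply ℝ ℝ ((1:ℝ), (0:ℝ))).comp (fderiv ℝ (fderiv ℝ f) p)) p :=
    (ContinuousLinearMap.apply ℝ ℝ ((1:ℝ), (0:ℝ))).hasFDerivAt.comp p (hdfd p).hasFDerivAt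
  have h2 : HasFDerivAt (P2 f)
      ((ContinuousLinearMap.apply ℝ ℝ ((0:ℝ), (1:ℝ))).comp (fderiv ℝ (fderiv ℝ f) p)) p :=
    (ContinuousLinearMap.apply ℝ ℝ ((0:ℝ), (1:ℝ))).hasFDerivAt.comp p (hdfd p).hasFDerivAt
  have e1 : fderiv ℝ (P1 f) p = _ := h1.fderiv
  have e2 : fderiv ℝ (P2 f) p = _ := h2.fderiv
  simp only [P1, P2, e1, e2, ContinuousLinearMap.comp_apply, ContinuousLinearMap.apply_apply]
  exact second_derivative_symmetric (fun y => ((hf.differentiable two_ne_zero) y).hasFDerivAt)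
    ((hdfd p).hasFDerivAt) _ _

private lemma derQ1 {E m r : ℝ} (hr : r ≠ 0) :
    HasDerivAt (fun t : ℝ => E/t - m^2/(2*t^2)) (-(E/r^2) + m^2/r^3) r := by
  have h1 : HasDerivAt (fun t : ℝ => E/t) ((0 * r - E * 1)/r^2) r :=
    (hasDerivAt_const r E).div (hasDerivAt_id r) hr
  have h2 : HasDerivAt (fun t : ℝ => m^2/(2*t^2))
      ((0 * (2*r^2) - m^2 * (2*(2*r^1)))/(2*r^2)^2) r := by
    refine (hasDerivAt_const r (m^2)).div ?_ (by positivity)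
    simpa using (hasDerivAt_pow 2 r).const_mul 2
  have := h1.sub h2
  refine this.congr_deriv ?_
  field_simp
  try ring

private lemma derQ2 {E m r : ℝ} (hr : r ≠ 0) :
    HasDerivAt (fun t : ℝ => E/t - m^2/t^2) (-(E/r^2) + 2*m^2/r^3) r := by
  have h1 : HasDerivAt (fun t : ℝ => E/t) ((0 * r - E * 1)/r^2) r :=
    (hasDerivAt_const r E).div (hasDerivAt_id r) hr
  have h2 : HasDerivAt (fun t : ℝ => m^2/t^2)
      ((0 * r^2 - m^2 * (2*r^1))/(r^2)^2) r :=
    (hasDerivAt_const r (m^2)).div (by simpa using hasDerivAt_pow 2 r) (by positivity)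
  have := h1.sub h2
  refine this.congr_deriv ?_
  field_simp
  try ring

private lemma derQ3 {r : ℝ} (hr : r ≠ 0) :
    HasDerivAt (fun t : ℝ => 1/t) (-(1/r^2)) r := by
  have h1 : HasDerivAt (fun t : ℝ => 1/t) ((0 * r - 1 * 1)/r^2) r :=
    (hasDerivAt_const r 1).div (hasDerivAt_id r) hr
  convert h1 using 1
  field_simp
  ring

private lemma derQ4 {E ρ : ℝ} (y : ℝ) :
    HasDerivAt (fun y' : ℝ => E/ρ - y'^2/(2*ρ^2)) (-(y/ρ^2)) y := by
  have h2 : HasDerivAt (fun y' : ℝ => y'^2/(2*ρ^2)) ((2*y^1)/(2*ρ^2)) y :=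
    (hasDerivAt_pow 2 y).div_const (2*ρ^2)
  have := (hasDerivAt_const y (E/ρ)).sub h2
  refine this.congr_deriv ?_
  field_simp
  try ring

private lemma derQ5 {E ρ : ℝ} (y : ℝ) :
    HasDerivAt (fun y' : ℝ => E/ρ - y'^2/ρ^2) (-(2*y/ρ^2)) y := by
  have h2 : HasDerivAt (fun y' : ℝ => y'^2/ρ^2) ((2*y^1)/ρ^2) y :=
    (hasDerivAt_pow 2 y).div_const (ρ^2)
  have := (hasDerivAt_const y (E/ρ)).sub h2
  refine this.congr_deriv ?_
  field_simp
  try ring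

private lemma finalAlgQ {A B C Dv ρ m E : ℝ} (hρ : 0 < ρ) (hApos : 0 < A)
    (hBneg : B < 0) (hDneg : Dv < 0) (hCo : C^2 < B*Dv) :
    0 < (m^2/ρ^3 * A - (E/ρ - m^2/ρ^2)^2/ρ * B - (E/ρ - m^2/ρ^2)/ρ^2 * (C + C)
          - 1/ρ^3 * Dv) * (1/ρ * A - m^2/ρ^3 * B)
        - (-(m/ρ^2) * A - m*(E/ρ - m^2/ρ^2)/ρ^2 * B - m/ρ^3 * C)^2 := by
  have hρ' : ρ ≠ 0 := ne_of_gt hρ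
  have h1 : B*E^2 + 2*C*E + Dv < 0 := by
    nlinarith [sq_nonneg (B*E + C), hCo, hBneg]
  have key : (m^2/ρ^3 * A - (E/ρ - m^2/ρ^2)^2/ρ * B - (E/ρ - m^2/ρ^2)/ρ^2 * (C + C)
        - 1/ρ^3 * Dv) * (1/ρ * A - m^2/ρ^3 * B)
      - (-(m/ρ^2) * A - m*(E/ρ - m^2/ρ^2)/ρ^2 * B - m/ρ^3 * C)^2
      = 1/ρ^4 * (A * (-(B*E^2 + 2*C*E + Dv))) + m^2/ρ^6 * (B*Dv - C^2) := by
    field_simp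
    ring
  rw [key]
  have t1 : 0 < 1/ρ^4 * (A * (-(B*E^2 + 2*C*E + Dv))) := by
    apply mul_pos (by positivity)
    apply mul_pos hApos
    linarith
  have t2 : 0 ≤ m^2/ρ^6 * (B*Dv - C^2) := by
    apply mul_nonneg (by positivity)
    linarith
  linarith

/-- the second Sylvester minor `q_ρρ q_mm - q_ρm² > 0` for
`q(ρ,m,E) = -ρ G(E/ρ - m²/(2ρ²), 1/ρ)` under concavity of `G` and `G_e > 0`. -/
theorem q_minor2_pos
    (G : ℝ → ℝ → ℝ)
    (hG : ContDiff ℝ 2 (Function.uncurry G))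
    (hGe : ∀ e v : ℝ, 0 < deriv (fun x => G x v) e)
    (hGee : ∀ e v : ℝ, deriv (fun x => deriv (fun y => G y v) x) e < 0)
    (hGvv : ∀ e v : ℝ, deriv (fun x => deriv (fun y => G e y) x) v < 0)
    (hconc : ∀ e v : ℝ,
      (deriv (fun x => deriv (fun y => G y x) e) v) ^ 2 <
        (deriv (fun x => deriv (fun y => G y v) x) e) *
        (deriv (fun x => deriv (fun y => G e y) x) v))
    (q : ℝ → ℝ → ℝ → ℝ)
    (hq : ∀ ρ m E : ℝ, q ρ m E = -ρ * G (E / ρ - m ^ 2 / (2 * ρ ^ 2)) (1 / ρ)) :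
    ∀ ρ m E : ℝ, 0 < ρ →
      0 < (deriv (fun r => deriv (fun r' => q r' m E) r) ρ) *
            (deriv (fun y => deriv (fun y' => q ρ y' E) y) m)
          - (deriv (fun y => deriv (fun r => q r y E) ρ) m) ^ 2 := by
  intro ρ m E hρ
  have hρ' : ρ ≠ 0 := ne_of_gt hρ
  set f : ℝ × ℝ → ℝ := Function.uncurry G with hfdef
  have hf2 : ContDiff ℝ 2 f := hG
  have hfd : Differentiable ℝ f := hf2.differentiable two_ne_zero
  have hdf1 : ContDiff ℝ 1 (fderiv ℝ f) := hf2.fderiv_right (by norm_num)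
  have hdfd : Differentiable ℝ (fderiv ℝ f) := hdf1.differentiable one_ne_zero
  have hF1d : Differentiable ℝ (P1 f) := hdfd.clm_apply (differentiable_const _)
  have hF2d : Differentiable ℝ (P2 f) := hdfd.clm_apply (differentiable_const _)
  -- translate hypotheses
  have hG1 : ∀ e v : ℝ, deriv (fun x => G x v) e = P1 f (e, v) := fun e v =>
    (pdQ1 hfd e v).deriv
  have hG2 : ∀ e v : ℝ, deriv (fun y => G e y) v = P2 f (e, v) := fun e v =>
    (pdQ2 hfd e v).deriv
  have hA : ∀ e v : ℝ, 0 < P1 f (e, v) := fun e v => (hG1 e v) ▸ hGe e v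
  have hBn : ∀ e v : ℝ, P1 (P1 f) (e, v) < 0 := by
    intro e v
    have h1 : (fun x => deriv (fun y => G y v) x) = fun x => P1 f (x, v) :=
      funext fun x => hG1 x v
    have := hGee e v
    rwa [h1, (pdQ1 hF1d e v).deriv] at this
  have hDn : ∀ e v : ℝ, P2 (P2 f) (e, v) < 0 := by
    intro e v
    have h1 : (fun x => deriv (fun y => G e y) x) = fun x => P2 f (e, x) :=
      funext fun x => hG2 e x
    have := hGvv e v
    rwa [h1, (pdQ2 hF2d e v).deriv] at this
  have hCo : ∀ e v : ℝ, (P2 (P1 f) (e, v)) ^ 2 < P1 (P1 f) (e, v) * P2 (P2 f) (e, v) := by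
    intro e v
    have h1 : (fun x => deriv (fun y => G y x) e) = fun x => P1 f (e, x) :=
      funext fun x => hG1 e x
    have h2 : (fun x => deriv (fun y => G y v) x) = fun x => P1 f (x, v) :=
      funext fun x => hG1 x v
    have h3 : (fun x => deriv (fun y => G e y) x) = fun x => P2 f (e, x) :=
      funext fun x => hG2 e x
    have := hconc e v
    rwa [h1, h2, h3, (pdQ2 hF1d e v).deriv, (pdQ1 hF1d e v).deriv,
      (pdQ2 hF2d e v).deriv] at this
  -- first derivative in ρ, valid for all r ≠ 0 and all y
  have hqr : ∀ r : ℝ, r ≠ 0 → ∀ y : ℝ,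
      HasDerivAt (fun r' => q r' y E)
        (-f (E/r - y^2/(2*r^2), 1/r)
          + (E/r - y^2/r^2) * P1 f (E/r - y^2/(2*r^2), 1/r)
          + (1/r) * P2 f (E/r - y^2/(2*r^2), 1/r)) r := by
    intro r hr y
    have heq : (fun r' => q r' y E) = fun r' => -r' * f (E/r' - y^2/(2*r'^2), 1/r') := by
      funext r'
      rw [hq]
      norm_num [hfdef, Function.uncurry]
    rw [heq]
    have hch := chainQ hfd (derQ1 (E := E) (m := y) hr) (derQ3 hr)
    have hmul := ((hasDerivAt_id r).neg).mul hch
    refine hmul.congr_deriv ?_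
    simp only [Pi.neg_apply, id]
    field_simp
    ring
  -- first derivative in m (ρ fixed), valid for all y
  have hqm : ∀ y : ℝ, HasDerivAt (fun y' => q ρ y' E)
      (y/ρ * P1 f (E/ρ - y^2/(2*ρ^2), 1/ρ)) y := by
    intro y
    have heq : (fun y' => q ρ y' E) = fun y' => -ρ * f (E/ρ - y'^2/(2*ρ^2), 1/ρ) := by
      funext y'
      rw [hq]
      norm_num [hfdef, Function.uncurry]
    rw [heq]
    have hch := chainQ hfd (derQ4 (E := E) (ρ := ρ) y) (hasDerivAt_const y (1/ρ))
    have hmul := hch.const_mul (-ρ)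
    refine hmul.congr_deriv ?_
    field_simp
    ring
  -- second derivative q_mm
  have hqmm : deriv (fun y => deriv (fun y' => q ρ y' E) y) m
      = 1/ρ * P1 f (E/ρ - m^2/(2*ρ^2), 1/ρ)
        - m^2/ρ^3 * P1 (P1 f) (E/ρ - m^2/(2*ρ^2), 1/ρ) := by
    have h1 : (fun y => deriv (fun y' => q ρ y' E) y)
        = fun y => y/ρ * P1 f (E/ρ - y^2/(2*ρ^2), 1/ρ) :=
      funext fun y => (hqm y).deriv
    rw [h1]
    have H : HasDerivAt (fun y : ℝ => y/ρ * P1 f (E/ρ - y^2/(2*ρ^2), 1/ρ))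
        (1/ρ * P1 f (E/ρ - m^2/(2*ρ^2), 1/ρ)
          - m^2/ρ^3 * P1 (P1 f) (E/ρ - m^2/(2*ρ^2), 1/ρ)) m := by
      have hch := chainQ hF1d (derQ4 (E := E) (ρ := ρ) m) (hasDerivAt_const m (1/ρ))
      have hmul := ((hasDerivAt_id m).div_const ρ).mul hch
      refine hmul.congr_deriv ?_
      simp only [id]
      field_simp
      ring
    exact H.deriv
  -- second derivative q_ρm
  have hqrm : deriv (fun y => deriv (fun r => q r y E) ρ) m
      = -(m/ρ^2) * P1 f (E/ρ - m^2/(2*ρ^2), 1/ρ)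
        - m*(E/ρ - m^2/ρ^2)/ρ^2 * P1 (P1 f) (E/ρ - m^2/(2*ρ^2), 1/ρ)
        - m/ρ^3 * P1 (P2 f) (E/ρ - m^2/(2*ρ^2), 1/ρ) := by
    have h1 : (fun y => deriv (fun r => q r y E) ρ)
        = fun y => -f (E/ρ - y^2/(2*ρ^2), 1/ρ)
            + (E/ρ - y^2/ρ^2) * P1 f (E/ρ - y^2/(2*ρ^2), 1/ρ)
            + (1/ρ) * P2 f (E/ρ - y^2/(2*ρ^2), 1/ρ) :=
      funext fun y => (hqr ρ hρ' y).deriv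
    rw [h1]
    have H : HasDerivAt (fun y : ℝ => -f (E/ρ - y^2/(2*ρ^2), 1/ρ)
            + (E/ρ - y^2/ρ^2) * P1 f (E/ρ - y^2/(2*ρ^2), 1/ρ)
            + (1/ρ) * P2 f (E/ρ - y^2/(2*ρ^2), 1/ρ))
        (-(m/ρ^2) * P1 f (E/ρ - m^2/(2*ρ^2), 1/ρ)
          - m*(E/ρ - m^2/ρ^2)/ρ^2 * P1 (P1 f) (E/ρ - m^2/(2*ρ^2), 1/ρ)
          - m/ρ^3 * P1 (P2 f) (E/ρ - m^2/(2*ρ^2), 1/ρ)) m := by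
      have hc0 := (chainQ hfd (derQ4 (E := E) (ρ := ρ) m) (hasDerivAt_const m (1/ρ))).neg
      have hc1 := (derQ5 (E := E) (ρ := ρ) m).mul
        (chainQ hF1d (derQ4 (E := E) (ρ := ρ) m) (hasDerivAt_const m (1/ρ)))
      have hc2 := (hasDerivAt_const m (1/ρ)).mul
        (chainQ hF2d (derQ4 (E := E) (ρ := ρ) m) (hasDerivAt_const m (1/ρ)))
      refine ((hc0.add hc1).add hc2).congr_deriv ?_
      field_simp
      ring
    exact H.deriv
  -- second derivative q_ρρ
  have hqrr : deriv (fun r => deriv (fun r' => q r' m E) r) ρ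
      = m^2/ρ^3 * P1 f (E/ρ - m^2/(2*ρ^2), 1/ρ)
        - (E/ρ - m^2/ρ^2)^2/ρ * P1 (P1 f) (E/ρ - m^2/(2*ρ^2), 1/ρ)
        - (E/ρ - m^2/ρ^2)/ρ^2 * (P2 (P1 f) (E/ρ - m^2/(2*ρ^2), 1/ρ)
            + P1 (P2 f) (E/ρ - m^2/(2*ρ^2), 1/ρ))
        - 1/ρ^3 * P2 (P2 f) (E/ρ - m^2/(2*ρ^2), 1/ρ) := by
    have hev : {r : ℝ | r ≠ 0} ∈ nhds ρ := isOpen_ne.mem_nhds hρ'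
    have hinner : (fun r => deriv (fun r' => q r' m E) r) =ᶠ[nhds ρ]
        (fun r => -f (E/r - m^2/(2*r^2), 1/r)
          + (E/r - m^2/r^2) * P1 f (E/r - m^2/(2*r^2), 1/r)
          + (1/r) * P2 f (E/r - m^2/(2*r^2), 1/r)) := by
      filter_upwards [hev] with r hr
      exact (hqr r hr m).deriv
    rw [hinner.deriv_eq]
    have H : HasDerivAt (fun r : ℝ => -f (E/r - m^2/(2*r^2), 1/r)
          + (E/r - m^2/r^2) * P1 f (E/r - m^2/(2*r^2), 1/r)
          + (1/r) * P2 f (E/r - m^2/(2*r^2), 1/r))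
        (m^2/ρ^3 * P1 f (E/ρ - m^2/(2*ρ^2), 1/ρ)
          - (E/ρ - m^2/ρ^2)^2/ρ * P1 (P1 f) (E/ρ - m^2/(2*ρ^2), 1/ρ)
          - (E/ρ - m^2/ρ^2)/ρ^2 * (P2 (P1 f) (E/ρ - m^2/(2*ρ^2), 1/ρ)
              + P1 (P2 f) (E/ρ - m^2/(2*ρ^2), 1/ρ))
          - 1/ρ^3 * P2 (P2 f) (E/ρ - m^2/(2*ρ^2), 1/ρ)) ρ := by
      have hc0 := (chainQ hfd (derQ1 (E := E) (m := m) hρ') (derQ3 hρ')).neg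
      have hc1 := (derQ2 (E := E) (m := m) hρ').mul
        (chainQ hF1d (derQ1 (E := E) (m := m) hρ') (derQ3 hρ'))
      have hc2 := (derQ3 hρ').mul
        (chainQ hF2d (derQ1 (E := E) (m := m) hρ') (derQ3 hρ'))
      refine ((hc0.add hc1).add hc2).congr_deriv ?_
      field_simp
      ring
    exact H.deriv
  -- final algebra
  rw [hqrr, hqmm, hqrm, show P1 (P2 f) (E/ρ - m^2/(2*ρ^2), 1/ρ)
      = P2 (P1 f) (E/ρ - m^2/(2*ρ^2), 1/ρ) from (symQ hf2 _).symm]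
  exact finalAlgQ hρ (hA _ _) (hBn _ _) (hDn _ _) (hCo _ _)
end

section
/- Let G : ℝ → ℝ → ℝ be twice differentiable with G_e > 0, G_{ee} < 0, G_{vv} < 0 and G_{ee}G_{vv} > G_{ev}² pointwise. Define q(ρ, m, E) = -ρ·G(E/ρ - m²/(2ρ²), 1/ρ) for ρ > 0. Then the determinant of the 3×3 Hessian of q with respect to (ρ, m, E) equals v⁵ G_e (G_{vv}G_{ee} - G_{ev}²) where v = 1/ρ, and in particular it is strictly positive. -/
/-!
Write `u = m/ρ`, `v = 1/ρ`, `w = E/ρ - u²`. The chain rule through the state map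
`(ρ, m, E) ↦ (e, v)` shows that every second partial of `q` is `v` times a polynomial in
`u, v, w`, `G_e` and the second partials of `G` at `(e, v)`. Once the two mixed partials of `G`
are identified (Schwarz), the determinant formula is a polynomial identity, and its sign is that of
`G_e (G_ee G_vv - G_ev²)`.
-/

open Matrix

noncomputable section

def partialFst (F : ℝ × ℝ → ℝ) (p : ℝ × ℝ) : ℝ := fderiv ℝ F p (1, 0)

def partialSnd (F : ℝ × ℝ → ℝ) (p : ℝ × ℝ) : ℝ := fderiv ℝ F p (0, 1)

section Partial

variable {F : ℝ × ℝ → ℝ}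

theorem HasDerivAt.comp_partial {γ : ℝ → ℝ × ℝ} {a b t : ℝ}
    (hγ : HasDerivAt γ (a, b) t) (hF : DifferentiableAt ℝ F (γ t)) :
    HasDerivAt (fun s => F (γ s)) (a * partialFst F (γ t) + b * partialSnd F (γ t)) t := by
  refine (hF.hasFDerivAt.comp_hasDerivAt t hγ).congr_deriv ?_
  have hab : ((a, b) : ℝ × ℝ) = a • ((1 : ℝ), (0 : ℝ)) + b • ((0 : ℝ), (1 : ℝ)) := by
    ext <;> simp
  rw [hab, map_add, map_smul, map_smul, smul_eq_mul, smul_eq_mul, partialFst, partialSnd]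

theorem deriv_apply_fst (hF : Differentiable ℝ F) (x y : ℝ) :
    deriv (fun x => F (x, y)) x = partialFst F (x, y) := by
  simpa using (((hasDerivAt_id x).prodMk (hasDerivAt_const x y)).comp_partial (hF _)).deriv

theorem deriv_apply_snd (hF : Differentiable ℝ F) (x y : ℝ) :
    deriv (fun y => F (x, y)) y = partialSnd F (x, y) := by
  simpa using (((hasDerivAt_const y x).prodMk (hasDerivAt_id y)).comp_partial (hF _)).deriv

theorem ContDiff.partialFst {m n : WithTop ℕ∞} (hF : ContDiff ℝ n F) (hmn : m + 1 ≤ n) :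
    ContDiff ℝ m (partialFst F) :=
  (hF.fderiv_right hmn).clm_apply contDiff_const

theorem ContDiff.partialSnd {m n : WithTop ℕ∞} (hF : ContDiff ℝ n F) (hmn : m + 1 ≤ n) :
    ContDiff ℝ m (partialSnd F) :=
  (hF.fderiv_right hmn).clm_apply contDiff_const

theorem partialSnd_partialFst (hF : ContDiff ℝ 2 F) (p : ℝ × ℝ) :
    partialSnd (partialFst F) p = partialFst (partialSnd F) p := by
  have hdiff : DifferentiableAt ℝ (fderiv ℝ F) p :=
    (hF.fderiv_right (m := 1) le_rfl).differentiable one_ne_zero p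
  have hflip (d : ℝ × ℝ) :
      fderiv ℝ (fun p => fderiv ℝ F p d) p = (fderiv ℝ (fderiv ℝ F) p).flip d := by
    simpa using fderiv_clm_apply hdiff (differentiableAt_const d)
  change fderiv ℝ (fun p => fderiv ℝ F p (1, 0)) p (0, 1)
    = fderiv ℝ (fun p => fderiv ℝ F p (0, 1)) p (1, 0)
  rw [hflip, hflip]
  exact hF.contDiffAt.isSymmSndFDerivAt (by simp) (0, 1) (1, 0)

end Partial

/-- Specific internal energy and specific volume `(e, v)` of the conserved variables `(ρ, m, E)`. -/
def eulerState (ρ m E : ℝ) : ℝ × ℝ := (E / ρ - m ^ 2 / (2 * ρ ^ 2), 1 / ρ)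

def eulerEntropy (F : ℝ × ℝ → ℝ) (ρ m E : ℝ) : ℝ := -ρ * F (eulerState ρ m E)

section EulerState

variable {ρ m E : ℝ}

theorem hasDerivAt_eulerState_rho (hρ : ρ ≠ 0) :
    HasDerivAt (fun r => eulerState r m E)
      (-(1 / ρ) * (E / ρ - (m / ρ) ^ 2), -(1 / ρ) ^ 2) ρ := by
  have he := ((hasDerivAt_const ρ E).fun_div (hasDerivAt_id' ρ) hρ).fun_sub
    ((hasDerivAt_const ρ (m ^ 2)).fun_div (((hasDerivAt_id' ρ).fun_pow 2).const_mul 2)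
      (by positivity))
  have hv := (hasDerivAt_const ρ (1 : ℝ)).fun_div (hasDerivAt_id' ρ) hρ
  refine (he.prodMk hv).congr_deriv (congrArg₂ Prod.mk ?_ ?_) <;> field_simp <;> ring

theorem hasDerivAt_eulerState_m :
    HasDerivAt (fun y => eulerState ρ y E) (-(m / ρ * (1 / ρ)), 0) m := by
  have he := ((hasDerivAt_pow 2 m).div_const (2 * ρ ^ 2)).const_sub (E / ρ)
  refine (he.prodMk (hasDerivAt_const m (1 / ρ))).congr_deriv (congrArg₂ Prod.mk ?_ rfl)
  ring

theorem hasDerivAt_eulerState_E :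
    HasDerivAt (fun z => eulerState ρ m z) (1 / ρ, 0) E :=
  (((hasDerivAt_id E).div_const ρ).sub_const _).prodMk (hasDerivAt_const E (1 / ρ))

end EulerState

section EulerEntropy

variable {F : ℝ × ℝ → ℝ} {ρ m E : ℝ}

theorem hasDerivAt_eulerEntropy_rho (hF : DifferentiableAt ℝ F (eulerState ρ m E))
    (hρ : ρ ≠ 0) :
    HasDerivAt (fun r => eulerEntropy F r m E)
      (-F (eulerState ρ m E) + (E / ρ - (m / ρ) ^ 2) * partialFst F (eulerState ρ m E)
        + 1 / ρ * partialSnd F (eulerState ρ m E)) ρ := by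
  refine ((hasDerivAt_id' ρ).fun_neg.fun_mul
    ((hasDerivAt_eulerState_rho hρ).comp_partial hF)).congr_deriv ?_
  field_simp
  ring

theorem hasDerivAt_eulerEntropy_m (hF : DifferentiableAt ℝ F (eulerState ρ m E))
    (hρ : ρ ≠ 0) :
    HasDerivAt (fun y => eulerEntropy F ρ y E) (m / ρ * partialFst F (eulerState ρ m E)) m := by
  refine ((hasDerivAt_eulerState_m.comp_partial hF).const_mul (-ρ)).congr_deriv ?_
  field_simp
  ring

theorem hasDerivAt_eulerEntropy_E (hF : DifferentiableAt ℝ F (eulerState ρ m E))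
    (hρ : ρ ≠ 0) :
    HasDerivAt (fun z => eulerEntropy F ρ m z) (-partialFst F (eulerState ρ m E)) E := by
  refine ((hasDerivAt_eulerState_E.comp_partial hF).const_mul (-ρ)).congr_deriv ?_
  field_simp
  ring

theorem deriv_deriv_eulerEntropy_E_E (hF : Differentiable ℝ F)
    (hF₁ : Differentiable ℝ (partialFst F)) (hρ : ρ ≠ 0) :
    deriv (fun z => deriv (fun z' => eulerEntropy F ρ m z') z) E
      = -(1 / ρ * partialFst (partialFst F) (eulerState ρ m E)) := by
  have hd : deriv (fun z' => eulerEntropy F ρ m z')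
      = fun z => -partialFst F (eulerState ρ m z) :=
    funext fun z => (hasDerivAt_eulerEntropy_E (hF _) hρ).deriv
  rw [hd]
  refine ((hasDerivAt_eulerState_E.comp_partial (hF₁ _)).fun_neg.congr_deriv ?_).deriv
  ring

theorem deriv_deriv_eulerEntropy_m_E (hF : Differentiable ℝ F)
    (hF₁ : Differentiable ℝ (partialFst F)) (hρ : ρ ≠ 0) :
    deriv (fun z => deriv (fun y => eulerEntropy F ρ y z) m) E
      = m / ρ * (1 / ρ) * partialFst (partialFst F) (eulerState ρ m E) := by
  have hd : (fun z => deriv (fun y => eulerEntropy F ρ y z) m)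
      = fun z => m / ρ * partialFst F (eulerState ρ m z) :=
    funext fun z => (hasDerivAt_eulerEntropy_m (hF _) hρ).deriv
  rw [hd]
  refine (((hasDerivAt_eulerState_E.comp_partial (hF₁ _)).const_mul (m / ρ)).congr_deriv
    ?_).deriv
  ring

theorem deriv_deriv_eulerEntropy_m_m (hF : Differentiable ℝ F)
    (hF₁ : Differentiable ℝ (partialFst F)) (hρ : ρ ≠ 0) :
    deriv (fun y => deriv (fun y' => eulerEntropy F ρ y' E) y) m
      = 1 / ρ * (partialFst F (eulerState ρ m E)
        - (m / ρ) ^ 2 * partialFst (partialFst F) (eulerState ρ m E)) := by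
  have hd : deriv (fun y' => eulerEntropy F ρ y' E)
      = fun y => y / ρ * partialFst F (eulerState ρ y E) :=
    funext fun y => (hasDerivAt_eulerEntropy_m (hF _) hρ).deriv
  rw [hd]
  refine ((((hasDerivAt_id' m).div_const ρ).fun_mul
    (hasDerivAt_eulerState_m.comp_partial (hF₁ _))).congr_deriv ?_).deriv
  ring

theorem deriv_deriv_eulerEntropy_rho_E (hF : Differentiable ℝ F)
    (hF₁ : Differentiable ℝ (partialFst F)) (hF₂ : Differentiable ℝ (partialSnd F))
    (hρ : ρ ≠ 0) :
    deriv (fun z => deriv (fun r => eulerEntropy F r m z) ρ) E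
      = 1 / ρ * ((E / ρ - (m / ρ) ^ 2) * partialFst (partialFst F) (eulerState ρ m E)
        + 1 / ρ * partialFst (partialSnd F) (eulerState ρ m E)) := by
  have hd : (fun z => deriv (fun r => eulerEntropy F r m z) ρ)
      = fun z => -F (eulerState ρ m z) + (z / ρ - (m / ρ) ^ 2) * partialFst F (eulerState ρ m z)
        + 1 / ρ * partialSnd F (eulerState ρ m z) :=
    funext fun z => (hasDerivAt_eulerEntropy_rho (hF _) hρ).deriv
  rw [hd]
  refine ((((hasDerivAt_eulerState_E.comp_partial (hF _)).fun_neg.fun_add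
    ((((hasDerivAt_id' E).div_const ρ).sub_const ((m / ρ) ^ 2)).fun_mul
      (hasDerivAt_eulerState_E.comp_partial (hF₁ _)))).fun_add
    ((hasDerivAt_eulerState_E.comp_partial (hF₂ _)).const_mul (1 / ρ))).congr_deriv ?_).deriv
  ring

theorem deriv_deriv_eulerEntropy_rho_m (hF : Differentiable ℝ F)
    (hF₁ : Differentiable ℝ (partialFst F)) (hF₂ : Differentiable ℝ (partialSnd F))
    (hρ : ρ ≠ 0) :
    deriv (fun y => deriv (fun r => eulerEntropy F r y E) ρ) m
      = -(m / ρ * (1 / ρ) * (partialFst F (eulerState ρ m E)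
        + (E / ρ - (m / ρ) ^ 2) * partialFst (partialFst F) (eulerState ρ m E)
        + 1 / ρ * partialFst (partialSnd F) (eulerState ρ m E))) := by
  have hd : (fun y => deriv (fun r => eulerEntropy F r y E) ρ)
      = fun y => -F (eulerState ρ y E) + (E / ρ - (y / ρ) ^ 2) * partialFst F (eulerState ρ y E)
        + 1 / ρ * partialSnd F (eulerState ρ y E) :=
    funext fun y => (hasDerivAt_eulerEntropy_rho (hF _) hρ).deriv
  rw [hd]
  refine ((((hasDerivAt_eulerState_m.comp_partial (hF _)).fun_neg.fun_add
    (((((hasDerivAt_id' m).div_const ρ).fun_pow 2).const_sub (E / ρ)).fun_mul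
      (hasDerivAt_eulerState_m.comp_partial (hF₁ _)))).fun_add
    ((hasDerivAt_eulerState_m.comp_partial (hF₂ _)).const_mul (1 / ρ))).congr_deriv ?_).deriv
  ring

theorem deriv_deriv_eulerEntropy_rho_rho (hF : Differentiable ℝ F)
    (hF₁ : Differentiable ℝ (partialFst F)) (hF₂ : Differentiable ℝ (partialSnd F))
    (hρ : ρ ≠ 0) :
    deriv (fun r => deriv (fun r' => eulerEntropy F r' m E) r) ρ
      = 1 / ρ * ((m / ρ) ^ 2 * partialFst F (eulerState ρ m E)
        - (E / ρ - (m / ρ) ^ 2) ^ 2 * partialFst (partialFst F) (eulerState ρ m E)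
        - 1 / ρ * (E / ρ - (m / ρ) ^ 2) * (partialSnd (partialFst F) (eulerState ρ m E)
          + partialFst (partialSnd F) (eulerState ρ m E))
        - (1 / ρ) ^ 2 * partialSnd (partialSnd F) (eulerState ρ m E)) := by
  have hd : deriv (fun r' => eulerEntropy F r' m E) =ᶠ[nhds ρ]
      fun r => -F (eulerState r m E) + (E / r - (m / r) ^ 2) * partialFst F (eulerState r m E)
        + 1 / r * partialSnd F (eulerState r m E) := by
    filter_upwards [isOpen_ne.mem_nhds hρ] with r hr
    exact (hasDerivAt_eulerEntropy_rho (hF _) hr).deriv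
  rw [hd.deriv_eq]
  have hw := (((hasDerivAt_const ρ E).fun_div (hasDerivAt_id' ρ) hρ).fun_sub
    (((hasDerivAt_const ρ m).fun_div (hasDerivAt_id' ρ) hρ).fun_pow 2))
  have hv := (hasDerivAt_const ρ (1 : ℝ)).fun_div (hasDerivAt_id' ρ) hρ
  refine ((((hasDerivAt_eulerState_rho hρ).comp_partial (hF _)).fun_neg.fun_add
    (hw.fun_mul ((hasDerivAt_eulerState_rho hρ).comp_partial (hF₁ _)))).fun_add
    (hv.fun_mul ((hasDerivAt_eulerState_rho hρ).comp_partial (hF₂ _)))).congr_deriv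
    ?_ |>.deriv
  simp only [Nat.reduceSub, pow_one]
  field_simp
  ring

end EulerEntropy

/-- The matrix is the Hessian of `eulerEntropy F` at `(ρ, m, E)`, with `u = m/ρ`, `v = 1/ρ`,
`w = E/ρ - u²`, `P = ∂₁F` and `a, b, c` the second partials `∂₁∂₁F, ∂₂∂₁F, ∂₂∂₂F` at
`eulerState ρ m E`. -/
theorem det_eulerEntropy_hessian_form (u v w P a b c : ℝ) :
    det !![v * (u ^ 2 * P - w ^ 2 * a - v * w * (b + b) - v ^ 2 * c),
        -(u * v * (P + w * a + v * b)), v * (w * a + v * b);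
      -(u * v * (P + w * a + v * b)), v * (P - u ^ 2 * a), u * v * a;
      v * (w * a + v * b), u * v * a, -(v * a)] = v ^ 5 * P * (c * a - b ^ 2) := by
  simp only [det_fin_three, of_apply, cons_val', cons_val_zero, cons_val_fin_one, cons_val_one,
    cons_val]
  ring

end

theorem q_hessian_det_general
    (G : ℝ → ℝ → ℝ)
    (hG : ContDiff ℝ 2 (Function.uncurry G))
    (hGe : ∀ e v : ℝ, 0 < deriv (fun x => G x v) e)
    (hconc : ∀ e v : ℝ,
      (deriv (fun x => deriv (fun y => G y x) e) v) ^ 2 <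
        (deriv (fun x => deriv (fun y => G y v) x) e) *
        (deriv (fun x => deriv (fun y => G e y) x) v))
    (q : ℝ → ℝ → ℝ → ℝ)
    (hq : ∀ ρ m E : ℝ, q ρ m E = -ρ * G (E / ρ - m ^ 2 / (2 * ρ ^ 2)) (1 / ρ)) :
    ∀ ρ m E : ℝ, 0 < ρ →
      let e := E / ρ - m ^ 2 / (2 * ρ ^ 2)
      let v := 1 / ρ
      let qρρ := deriv (fun r => deriv (fun r' => q r' m E) r) ρ
      let qmm := deriv (fun y => deriv (fun y' => q ρ y' E) y) m
      let qEE := deriv (fun z => deriv (fun z' => q ρ m z') z) E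
      let qρm := deriv (fun y => deriv (fun r => q r y E) ρ) m
      let qρE := deriv (fun z => deriv (fun r => q r m z) ρ) E
      let qmE := deriv (fun z => deriv (fun y => q ρ y z) m) E
      let Ge := deriv (fun x => G x v) e
      let Gee := deriv (fun x => deriv (fun y => G y v) x) e
      let Gvv := deriv (fun x => deriv (fun y => G e y) x) v
      let Gev := deriv (fun x => deriv (fun y => G y x) e) v
      Matrix.det !![qρρ, qρm, qρE; qρm, qmm, qmE; qρE, qmE, qEE]
        = v ^ 5 * Ge * (Gvv * Gee - Gev ^ 2)
      ∧ 0 < Matrix.det !![qρρ, qρm, qρE; qρm, qmm, qmE; qρE, qmE, qEE] := by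
  intro ρ m E hρ
  obtain rfl : q = eulerEntropy (Function.uncurry G) := by
    funext ρ m E
    exact hq ρ m E
  have hF := hG.differentiable two_ne_zero
  have hF₁ := (hG.partialFst (m := 1) (by norm_num)).differentiable one_ne_zero
  have hF₂ := (hG.partialSnd (m := 1) (by norm_num)).differentiable one_ne_zero
  have hGfst : ∀ e v, deriv (fun x => G x v) e = partialFst (Function.uncurry G) (e, v) :=
    deriv_apply_fst hF
  have hGsnd : ∀ e v, deriv (fun y => G e y) v = partialSnd (Function.uncurry G) (e, v) :=
    deriv_apply_snd hF
  simp only [hGfst, hGsnd, deriv_apply_fst hF₁, deriv_apply_snd hF₁, deriv_apply_snd hF₂]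
    at hGe hconc ⊢
  rw [deriv_deriv_eulerEntropy_rho_rho hF hF₁ hF₂ hρ.ne',
    deriv_deriv_eulerEntropy_rho_m hF hF₁ hF₂ hρ.ne',
    deriv_deriv_eulerEntropy_rho_E hF hF₁ hF₂ hρ.ne', deriv_deriv_eulerEntropy_m_m hF hF₁ hρ.ne',
    deriv_deriv_eulerEntropy_m_E hF hF₁ hρ.ne', deriv_deriv_eulerEntropy_E_E hF hF₁ hρ.ne',
    ← partialSnd_partialFst hG, det_eulerEntropy_hessian_form]
  exact ⟨rfl, mul_pos (mul_pos (by positivity) (hGe _ _))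
    (sub_pos.2 ((hconc _ _).trans_eq (mul_comm _ _)))⟩

/-- the determinant of the Hessian of
`q(ρ,m,E) = -ρ G(E/ρ - m²/(2ρ²), 1/ρ)` in the variables `(ρ,m,E)` equals
`v⁵ G_e (G_vv G_ee - G_ev²)` with `v = 1/ρ`, and is strictly positive. -/
theorem q_hessian_det
    (G : ℝ → ℝ → ℝ)
    (hG : ContDiff ℝ 2 (Function.uncurry G))
    (hGe : ∀ e v : ℝ, 0 < deriv (fun x => G x v) e)
    (hGee : ∀ e v : ℝ, deriv (fun x => deriv (fun y => G y v) x) e < 0)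
    (hGvv : ∀ e v : ℝ, deriv (fun x => deriv (fun y => G e y) x) v < 0)
    (hconc : ∀ e v : ℝ,
      (deriv (fun x => deriv (fun y => G y x) e) v) ^ 2 <
        (deriv (fun x => deriv (fun y => G y v) x) e) *
        (deriv (fun x => deriv (fun y => G e y) x) v))
    (q : ℝ → ℝ → ℝ → ℝ)
    (hq : ∀ ρ m E : ℝ, q ρ m E = -ρ * G (E / ρ - m ^ 2 / (2 * ρ ^ 2)) (1 / ρ)) :
    ∀ ρ m E : ℝ, 0 < ρ →
      let e := E / ρ - m ^ 2 / (2 * ρ ^ 2)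
      let v := 1 / ρ
      let qρρ := deriv (fun r => deriv (fun r' => q r' m E) r) ρ
      let qmm := deriv (fun y => deriv (fun y' => q ρ y' E) y) m
      let qEE := deriv (fun z => deriv (fun z' => q ρ m z') z) E
      let qρm := deriv (fun y => deriv (fun r => q r y E) ρ) m
      let qρE := deriv (fun z => deriv (fun r => q r m z) ρ) E
      let qmE := deriv (fun z => deriv (fun y => q ρ y z) m) E
      let Ge := deriv (fun x => G x v) e
      let Gee := deriv (fun x => deriv (fun y => G y v) x) e
      let Gvv := deriv (fun x => deriv (fun y => G e y) x) v
      let Gev := deriv (fun x => deriv (fun y => G y x) e) v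
      Matrix.det !![qρρ, qρm, qρE; qρm, qmm, qmE; qρE, qmE, qEE]
        = v ^ 5 * Ge * (Gvv * Gee - Gev ^ 2)
      ∧ 0 < Matrix.det !![qρρ, qρm, qρE; qρm, qmm, qmE; qρE, qmE, qEE] :=
  q_hessian_det_general G hG hGe hconc q hq
end

section
/- Let G : ℝ → ℝ → ℝ be a C² function that is strictly concave (its Hessian is negative definite everywhere) and satisfies G_e > 0. Then the function q(ρ, m, E) := -ρ·G(E/ρ - m²/(2ρ²), 1/ρ), defined on the region {(ρ,m,E) : ρ > 0}, is convex. -/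
open Set AffineMap

/-!
With `u = m / ρ`, `ε = E / ρ` and `v = 1 / ρ`, we have `q(ρ, m, E) = ρ h(u, ε, v)` for
`h(u, ε, v) = -G(ε - u² / 2, v)`: `q` is the perspective `(t, y) ↦ t h(y / t)` of `h`, taken at
`y = (m, E, 1)`, and perspectives of convex functions are convex. So it suffices that `h` is convex.
A negative semidefinite Hessian makes `G` concave (along every line), `G` is increasing in `e`, and
`ε - u² / 2` is concave, hence `G(ε - u² / 2, v)` is concave.
-/

theorem concaveOn_univ_of_forall_concaveOn_comp_lineMap {E : Type*} [AddCommGroup E]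
    [Module ℝ E] {f : E → ℝ} (hf : ∀ x y : E, ConcaveOn ℝ univ (f ∘ (lineMap x y : ℝ → E))) :
    ConcaveOn ℝ univ f := by
  refine ⟨convex_univ, fun x _ y _ a b ha hb hab => ?_⟩
  obtain rfl : a = 1 - b := eq_sub_of_add_eq hab
  simpa [lineMap_apply_module] using (hf x y).2 (mem_univ 0) (mem_univ 1) ha hb hab

theorem concaveOn_univ_of_fderiv_fderiv_nonpos {E : Type*} [NormedAddCommGroup E]
    [NormedSpace ℝ E] {f : E → ℝ} (hf : ContDiff ℝ 2 f)
    (hf'' : ∀ x v, fderiv ℝ (fderiv ℝ f) x v v ≤ 0) : ConcaveOn ℝ univ f := by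
  have hf₁ : ∀ z, HasFDerivAt f (fderiv ℝ f z) z := fun z =>
    (hf.differentiable two_ne_zero z).hasFDerivAt
  have hf₂ : ∀ z, HasFDerivAt (fderiv ℝ f) (fderiv ℝ (fderiv ℝ f) z) z := fun z =>
    ((hf.fderiv_right (m := 1) le_rfl).differentiable one_ne_zero z).hasFDerivAt
  refine concaveOn_univ_of_forall_concaveOn_comp_lineMap fun x y => ?_
  set g : ℝ → E := ⇑(lineMap (k := ℝ) x y)
  have hg₁ : ∀ t, HasDerivAt (f ∘ g) (fderiv ℝ f (g t) (y - x)) t :=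
    fun t => (hf₁ _).comp_hasDerivAt t hasDerivAt_lineMap
  have hg₂ : ∀ t, HasDerivAt (deriv (f ∘ g))
      (fderiv ℝ (fderiv ℝ f) (g t) (y - x) (y - x)) t := by
    intro t
    rw [funext fun s => (hg₁ s).deriv]
    have h := ((hf₂ (g t)).comp_hasDerivAt t hasDerivAt_lineMap).clm_apply
      (hasDerivAt_const t (y - x))
    rwa [map_zero, add_zero] at h
  refine concaveOn_univ_of_deriv2_nonpos (fun t => (hg₁ t).differentiableAt)
    (fun t => (hg₂ t).differentiableAt) fun t => ?_
  rw [Function.iterate_succ_apply, Function.iterate_one, (hg₂ t).deriv]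
  exact hf'' _ _

section Partials

variable {F : Type*} [NormedAddCommGroup F] [NormedSpace ℝ F]

theorem hasDerivAt_comp_mk_fst {f : ℝ × ℝ → F} {e v : ℝ} (hf : DifferentiableAt ℝ f (e, v)) :
    HasDerivAt (fun x => f (x, v)) (fderiv ℝ f (e, v) (1, 0)) e :=
  hf.hasFDerivAt.comp_hasDerivAt e ((hasDerivAt_id e).prodMk (hasDerivAt_const e v))

theorem hasDerivAt_comp_mk_snd {f : ℝ × ℝ → F} {e v : ℝ} (hf : DifferentiableAt ℝ f (e, v)) :
    HasDerivAt (fun y => f (e, y)) (fderiv ℝ f (e, v) (0, 1)) v :=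
  hf.hasFDerivAt.comp_hasDerivAt v ((hasDerivAt_const v e).prodMk (hasDerivAt_id v))

variable {f : ℝ → ℝ → ℝ} (hf : ContDiff ℝ 2 (Function.uncurry f)) (e v : ℝ)
include hf

theorem deriv_deriv_fst_fst :
    deriv (fun x => deriv (fun y => f y v) x) e
      = fderiv ℝ (fderiv ℝ (Function.uncurry f)) (e, v) (1, 0) (1, 0) := by
  have hf' := (hf.fderiv_right (m := 1) le_rfl).differentiable one_ne_zero
  have h : ∀ x, deriv (fun y => f y v) x = fderiv ℝ (Function.uncurry f) (x, v) (1, 0) := fun x =>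
    (hasDerivAt_comp_mk_fst (hf.differentiable two_ne_zero (x, v))).deriv
  simp_rw [h]
  simpa using ((hasDerivAt_comp_mk_fst (hf' (e, v))).clm_apply (hasDerivAt_const e (1, 0))).deriv

theorem deriv_deriv_snd_fst :
    deriv (fun x => deriv (fun y => f y x) e) v
      = fderiv ℝ (fderiv ℝ (Function.uncurry f)) (e, v) (0, 1) (1, 0) := by
  have hf' := (hf.fderiv_right (m := 1) le_rfl).differentiable one_ne_zero
  have h : ∀ x, deriv (fun y => f y x) e = fderiv ℝ (Function.uncurry f) (e, x) (1, 0) := fun x =>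
    (hasDerivAt_comp_mk_fst (hf.differentiable two_ne_zero (e, x))).deriv
  simp_rw [h]
  simpa using ((hasDerivAt_comp_mk_snd (hf' (e, v))).clm_apply (hasDerivAt_const v (1, 0))).deriv

theorem deriv_deriv_snd_snd :
    deriv (fun x => deriv (fun y => f e y) x) v
      = fderiv ℝ (fderiv ℝ (Function.uncurry f)) (e, v) (0, 1) (0, 1) := by
  have hf' := (hf.fderiv_right (m := 1) le_rfl).differentiable one_ne_zero
  have h : ∀ x, deriv (fun y => f e y) x = fderiv ℝ (Function.uncurry f) (e, x) (0, 1) := fun x =>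
    (hasDerivAt_comp_mk_snd (hf.differentiable two_ne_zero (e, x))).deriv
  simp_rw [h]
  simpa using ((hasDerivAt_comp_mk_snd (hf' (e, v))).clm_apply (hasDerivAt_const v (0, 1))).deriv

end Partials

theorem IsSymmSndFDerivAt.fderiv_fderiv_apply_mk_mk {f : ℝ × ℝ → ℝ} {p : ℝ × ℝ}
    (hf : IsSymmSndFDerivAt ℝ f p) (a b : ℝ) :
    fderiv ℝ (fderiv ℝ f) p (a, b) (a, b)
      = a ^ 2 * fderiv ℝ (fderiv ℝ f) p (1, 0) (1, 0)
        + 2 * a * b * fderiv ℝ (fderiv ℝ f) p (0, 1) (1, 0)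
        + b ^ 2 * fderiv ℝ (fderiv ℝ f) p (0, 1) (0, 1) := by
  have hab : ((a, b) : ℝ × ℝ) = a • (1, 0) + b • (0, 1) := by simp
  rw [hab]
  simp only [map_add, map_smul, add_apply, smul_apply, smul_eq_mul, hf (1, 0) (0, 1)]
  ring

theorem ConcaveOn.comp_fst_of_monotone {E F : Type*} [AddCommGroup E] [Module ℝ E]
    [AddCommGroup F] [Module ℝ F] {f : ℝ × F → ℝ} {φ : E → ℝ} (hf : ConcaveOn ℝ univ f)
    (hf_mono : ∀ y, Monotone fun x => f (x, y)) (hφ : ConcaveOn ℝ univ φ) :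
    ConcaveOn ℝ univ fun p : E × F => f (φ p.1, p.2) := by
  refine ⟨convex_univ, fun p _ q _ a b ha hb hab => ?_⟩
  calc a • f (φ p.1, p.2) + b • f (φ q.1, q.2)
      ≤ f (a • (φ p.1, p.2) + b • (φ q.1, q.2)) := hf.2 trivial trivial ha hb hab
    _ = f (a • φ p.1 + b • φ q.1, (a • p + b • q).2) := rfl
    _ ≤ f (φ (a • p + b • q).1, (a • p + b • q).2) :=
      hf_mono _ (hφ.2 trivial trivial ha hb hab)

theorem concaveOn_snd_sub_sq_fst_div_two :
    ConcaveOn ℝ univ fun p : ℝ × ℝ => p.2 - p.1 ^ 2 / 2 := by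
  refine ⟨convex_univ, fun p _ q _ a b ha hb hab => ?_⟩
  obtain rfl : a = 1 - b := eq_sub_of_add_eq hab
  simp only [Prod.fst_add, Prod.snd_add, Prod.smul_fst, Prod.smul_snd, smul_eq_mul]
  nlinarith [mul_nonneg ha hb, sq_nonneg (p.1 - q.1)]

theorem exists_perspective_weights {E : Type*} [AddCommGroup E] [Module ℝ E] {t₁ t₂ a b : ℝ}
    (ht₁ : 0 < t₁) (ht₂ : 0 < t₂) (ha : 0 ≤ a) (hb : 0 ≤ b) (hab : a + b = 1) (x₁ x₂ : E) :
    ∃ μ₁ μ₂ : ℝ, 0 ≤ μ₁ ∧ 0 ≤ μ₂ ∧ μ₁ + μ₂ = 1 ∧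
      a * t₁ = (a * t₁ + b * t₂) * μ₁ ∧ b * t₂ = (a * t₁ + b * t₂) * μ₂ ∧
      (a * t₁ + b * t₂)⁻¹ • (a • x₁ + b • x₂) = μ₁ • t₁⁻¹ • x₁ + μ₂ • t₂⁻¹ • x₂ := by
  have ht : 0 < a * t₁ + b * t₂ := convex_Ioi (0 : ℝ) ht₁ ht₂ ha hb hab
  refine ⟨a * t₁ / (a * t₁ + b * t₂), b * t₂ / (a * t₁ + b * t₂), by positivity, by positivity,
    by field_simp, by field_simp, by field_simp, ?_⟩
  simp only [smul_add, smul_smul]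
  congr 2 <;> field_simp

theorem ConvexOn.perspective {E : Type*} [AddCommGroup E] [Module ℝ E] {s : Set E}
    {f : E → ℝ} (hf : ConvexOn ℝ s f) :
    ConvexOn ℝ {p : ℝ × E | 0 < p.1 ∧ p.1⁻¹ • p.2 ∈ s} fun p => p.1 * f (p.1⁻¹ • p.2) := by
  refine ⟨?_, ?_⟩ <;> rintro ⟨t₁, x₁⟩ ⟨ht₁, hx₁⟩ ⟨t₂, x₂⟩ ⟨ht₂, hx₂⟩ a b ha hb hab <;>
    obtain ⟨μ₁, μ₂, hμ₁, hμ₂, hμ, h₁, h₂, hx⟩ :=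
      exists_perspective_weights ht₁ ht₂ ha hb hab x₁ x₂ <;>
    simp only [Prod.smul_mk, Prod.mk_add_mk, smul_eq_mul, mem_ofPred_eq] at hx₁ hx₂ ⊢
  · exact ⟨convex_Ioi (0 : ℝ) ht₁ ht₂ ha hb hab, hx ▸ hf.1 hx₁ hx₂ hμ₁ hμ₂ hμ⟩
  · calc (a * t₁ + b * t₂) * f ((a * t₁ + b * t₂)⁻¹ • (a • x₁ + b • x₂))
        ≤ (a * t₁ + b * t₂) * (μ₁ * f (t₁⁻¹ • x₁) + μ₂ * f (t₂⁻¹ • x₂)) := by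
          rw [hx]
          exact mul_le_mul_of_nonneg_left (hf.2 hx₁ hx₂ hμ₁ hμ₂ hμ)
            (convex_Ioi (0 : ℝ) ht₁ ht₂ ha hb hab).le
      _ = a * (t₁ * f (t₁⁻¹ • x₁)) + b * (t₂ * f (t₂⁻¹ • x₂)) := by
          linear_combination (-f (t₁⁻¹ • x₁)) * h₁ - f (t₂⁻¹ • x₂) * h₂

theorem ConvexOn.perspective_prod_inv {E : Type*} [AddCommGroup E] [Module ℝ E]
    {f : E × ℝ → ℝ} (hf : ConvexOn ℝ univ f) :
    ConvexOn ℝ {p : ℝ × E | 0 < p.1} fun p => p.1 * f (p.1⁻¹ • p.2, p.1⁻¹) := by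
  let g : ℝ × E →ᵃ[ℝ] ℝ × (E × ℝ) :=
    ((LinearMap.fst ℝ ℝ E).prod ((LinearMap.snd ℝ ℝ E).prod 0)).toAffineMap +
      AffineMap.const ℝ (ℝ × E) (0, (0, 1))
  have hdom : g ⁻¹' {p | 0 < p.1 ∧ p.1⁻¹ • p.2 ∈ univ} = {p : ℝ × E | 0 < p.1} := by
    ext p; simp [g]
  refine (hdom ▸ hf.perspective.comp_affineMap g).congr fun p _ => ?_
  simp [g]

/-- convexity of `q(ρ,m,E) = -ρ G(E/ρ - m²/(2ρ²), 1/ρ)` on `{ρ > 0}`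
for a C², strictly concave entropy `G` (negative definite Hessian) with `G_e > 0`. -/
theorem q_convex
    (G : ℝ → ℝ → ℝ)
    (hG : ContDiff ℝ 2 (Function.uncurry G))
    (hGe : ∀ e v : ℝ, 0 < deriv (fun x => G x v) e)
    (hnegdef : ∀ e v a b : ℝ, (a, b) ≠ (0, 0) →
      a ^ 2 * (deriv (fun x => deriv (fun y => G y v) x) e)
        + 2 * a * b * (deriv (fun x => deriv (fun y => G y x) e) v)
        + b ^ 2 * (deriv (fun x => deriv (fun y => G e y) x) v) < 0) :
    ConvexOn ℝ {p : ℝ × ℝ × ℝ | 0 < p.1}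
      (fun p => -p.1 * G (p.2.2 / p.1 - p.2.1 ^ 2 / (2 * p.1 ^ 2)) (1 / p.1)) := by
  have hHess : ∀ p d, fderiv ℝ (fderiv ℝ (Function.uncurry G)) p d d ≤ 0 := by
    rintro ⟨e, v⟩ ⟨a, b⟩
    rw [(hG.contDiffAt.isSymmSndFDerivAt (by simp)).fderiv_fderiv_apply_mk_mk,
      ← deriv_deriv_fst_fst hG, ← deriv_deriv_snd_fst hG, ← deriv_deriv_snd_snd hG]
    rcases eq_or_ne (a, b) (0, 0) with hab | hab
    · obtain ⟨rfl, rfl⟩ := Prod.mk.inj hab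
      simp
    · exact (hnegdef e v a b hab).le
  have hmono : ∀ v, Monotone fun e => G e v := fun v =>
    (strictMono_of_deriv_pos (hGe · v)).monotone
  have hconvex : ConvexOn ℝ univ fun y : (ℝ × ℝ) × ℝ => -G (y.1.2 - y.1.1 ^ 2 / 2) y.2 :=
    ((concaveOn_univ_of_fderiv_fderiv_nonpos hG hHess).comp_fst_of_monotone hmono
      concaveOn_snd_sub_sq_fst_div_two).neg
  refine hconvex.perspective_prod_inv.congr fun ⟨ρ, m, E⟩ _ => ?_
  have he : ρ⁻¹ * E - (ρ⁻¹ * m) ^ 2 / 2 = E / ρ - m ^ 2 / (2 * ρ ^ 2) := by ring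
  simp [he]
end

section
/- Let U : ℝⁿ → ℝ be convex, let w_h : K → ℝⁿ be a function with cell average w̄_h satisfying U(w̄_h) < 0, and let U_h^max := sup_{x∈K} U(w_h(x)) with U_h^max > 0. Define θ₁ = U(w̄_h)/(U(w̄_h) - U_h^max) ∈ (0,1), θ = min{1, θ₁}, and w̃_h(x) = θ·w_h(x) + (1-θ)·w̄_h. Then: (i) the average of w̃_h over K equals w̄_h, and (ii) U(w̃_h(x)) ≤ 0 for all x ∈ K. -/
/-!
Rescaling towards the cell average is an affine combination with a constant, so it preserves the
average. For the invariant region, convexity bounds `U (θ w + (1 - θ) w̄)` by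
`θ Umax + (1 - θ) U w̄`, and `θ₁ = U w̄ / (U w̄ - Umax)` is exactly the weight at which this
affine function of `θ` vanishes.
-/

open MeasureTheory

section Average

variable {α E : Type*} [MeasurableSpace α] {μ : Measure α}
  [NormedAddCommGroup E] [NormedSpace ℝ E] [CompleteSpace E]

theorem average_smul_add_smul_average [IsFiniteMeasure μ] {f : α → E} (hf : Integrable f μ)
    (θ : ℝ) : ⨍ x, (θ • f x + (1 - θ) • ⨍ y, f y ∂μ) ∂μ = ⨍ x, f x ∂μ := by
  rcases eq_zero_or_neZero μ with rfl | _
  · simp only [average_zero_measure]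
  · rw [average_eq _, integral_add (f := fun x => θ • f x) (hf.smul θ) (integrable_const _),
      integral_smul, smul_add, ← average_eq, average_const, smul_comm, ← average_eq]
    module

end Average

theorem div_sub_mem_Ioo_of_neg_of_pos {a M : ℝ} (ha : a < 0) (hM : 0 < M) :
    a / (a - M) ∈ Set.Ioo 0 1 :=
  ⟨div_pos_of_neg_of_neg ha (by linarith), (div_lt_one_of_neg (by linarith)).2 (by linarith)⟩

theorem ConvexOn.map_smul_add_one_sub_smul_nonpos {E : Type*} [AddCommGroup E] [Module ℝ E]
    {s : Set E} {U : E → ℝ} (hU : ConvexOn ℝ s U) {y c : E} (hy : y ∈ s) (hc : c ∈ s) {M : ℝ}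
    (hyM : U y ≤ M) (hc₀ : U c < 0) (hM : 0 < M) :
    U ((U c / (U c - M)) • y + (1 - U c / (U c - M)) • c) ≤ 0 := by
  set θ := U c / (U c - M) with hθ
  have hθ_mem : θ ∈ Set.Ioo 0 1 := div_sub_mem_Ioo_of_neg_of_pos hc₀ hM
  have hroot : θ * M + (1 - θ) * U c = 0 := by
    rw [hθ]
    field_simp [(by linarith : U c - M ≠ 0)]
    ring
  calc U (θ • y + (1 - θ) • c) ≤ θ * U y + (1 - θ) * U c :=
        hU.2 hy hc hθ_mem.1.le (by linarith [hθ_mem.2]) (by ring)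
    _ ≤ θ * M + (1 - θ) * U c := by gcongr; exact hθ_mem.1.le
    _ = 0 := hroot

theorem IRP_limiter_general {n d : ℕ}
    (U : (Fin n → ℝ) → ℝ) (hU : ConvexOn ℝ Set.univ U)
    (K : Set (Fin d → ℝ))
    (hKfin : volume K ≠ ⊤)
    (wh : (Fin d → ℝ) → Fin n → ℝ) (hint : IntegrableOn wh K)
    (wbar : Fin n → ℝ)
    (hwbar : wbar = (volume K).toReal⁻¹ • ∫ x in K, wh x)
    (Umax : ℝ) (hUmax : ∀ x ∈ K, U (wh x) ≤ Umax) (hUmaxpos : 0 < Umax)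
    (hUbar : U wbar < 0)
    (θ : ℝ) (hθ : θ = min 1 (U wbar / (U wbar - Umax))) :
    U wbar / (U wbar - Umax) ∈ Set.Ioo (0 : ℝ) 1
    ∧ (volume K).toReal⁻¹ • (∫ x in K, (θ • wh x + (1 - θ) • wbar)) = wbar
    ∧ ∀ x ∈ K, U (θ • wh x + (1 - θ) • wbar) ≤ 0 := by
  have hθ₁ := div_sub_mem_Ioo_of_neg_of_pos hUbar hUmaxpos
  have hθ_eq : θ = U wbar / (U wbar - Umax) := by rw [hθ, min_eq_right hθ₁.2.le]
  refine ⟨hθ₁, ?_, fun x hx => ?_⟩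
  · have : IsFiniteMeasure (volume.restrict K) := isFiniteMeasure_restrict.2 hKfin
    rw [← measureReal_def] at hwbar ⊢
    rw [← setAverage_eq, hwbar, ← setAverage_eq]
    exact average_smul_add_smul_average hint θ
  · rw [hθ_eq]
    exact hU.map_smul_add_one_sub_smul_nonpos trivial trivial (hUmax x hx) hUbar hUmaxpos

/-- the IRP limiter `w̃ = θ w_h + (1-θ) w̄_h` with
`θ = min{1, U(w̄)/(U(w̄) - U_max)}` preserves the cell average and satisfies `U(w̃) ≤ 0`. -/
theorem IRP_limiter {n d : ℕ}
    (U : (Fin n → ℝ) → ℝ) (hU : ConvexOn ℝ Set.univ U)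
    (K : Set (Fin d → ℝ)) (hK : MeasurableSet K)
    (hKfin : volume K ≠ ⊤) (hKpos : 0 < volume K)
    (wh : (Fin d → ℝ) → Fin n → ℝ) (hint : IntegrableOn wh K)
    (wbar : Fin n → ℝ)
    (hwbar : wbar = (volume K).toReal⁻¹ • ∫ x in K, wh x)
    (Umax : ℝ) (hUmax : ∀ x ∈ K, U (wh x) ≤ Umax) (hUmaxpos : 0 < Umax)
    (hUbar : U wbar < 0)
    (θ : ℝ) (hθ : θ = min 1 (U wbar / (U wbar - Umax))) :
    U wbar / (U wbar - Umax) ∈ Set.Ioo (0 : ℝ) 1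
    ∧ (volume K).toReal⁻¹ • (∫ x in K, (θ • wh x + (1 - θ) • wbar)) = wbar
    ∧ ∀ x ∈ K, U (θ • wh x + (1 - θ) • wbar) ≤ 0 :=
  IRP_limiter_general U hU K hKfin wh hint wbar hwbar Umax hUmax hUmaxpos hUbar θ hθ
end

section
/- For the Tait-type equation of state with B = K_r v_r^ν > 0, ν ≥ 1, and Φ as above, the fundamental derivative 𝒢 = -(v/2)·F_{vvv}/F_{vv} satisfies 𝒢 = ((ν+1)/2)·(ν K_r v_r^ν)/(γ P v^ν) where γ = (v/P)F_{vv} and P = -F_v; in particular, whenever P > 0, C > 0 and v > 0, we have 𝒢 > 0. -/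
/-! In the volume variable `F` is `B Φ` plus a quadratic whose leading coefficient is
`D² / (2C)`, and `Φ' = -v^(-ν)`. Hence `F_vv = B ν v^(-ν-1) + D²/C > 0` and
`F_vvv = -B ν (ν+1) v^(-ν-2) < 0`; the formula follows from `γ P = v F_vv`. -/

open Real Filter Topology

lemma hasDerivAt_log_const_div {c x : ℝ} (hc : c ≠ 0) (hx : x ≠ 0) :
    HasDerivAt (fun y => log (c / y)) (-x⁻¹) x := by
  have h := ((hasDerivAt_inv hx).const_mul c).log (div_ne_zero hc hx)
  simp only [← div_eq_mul_inv] at h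
  refine h.congr_deriv ?_
  field_simp

lemma hasDerivAt_one_sub_rpow_div {ν c x : ℝ} (hν : ν ≠ 1) (hx : x ≠ 0) :
    HasDerivAt (fun y => 1 / (1 - ν) * (c ^ (1 - ν) - y ^ (1 - ν))) (-x ^ (-ν)) x := by
  have h := ((hasDerivAt_rpow_const (p := 1 - ν) (Or.inl hx)).const_sub (c ^ (1 - ν))).const_mul
    (1 / (1 - ν))
  rw [show 1 - ν - 1 = -ν by ring] at h
  refine h.congr_deriv ?_
  field_simp [sub_ne_zero.mpr hν.symm]

lemma hasDerivAt_tait_potential {ν vr : ℝ} (hvr : 0 < vr) {Φ : ℝ → ℝ}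
    (hΦ : (ν = 1 ∧ ∀ v : ℝ, 0 < v → Φ v = Real.log (vr / v)) ∨
          (1 < ν ∧ ∀ v : ℝ, 0 < v →
            Φ v = (1 / (1 - ν)) * (vr ^ (1 - ν) - v ^ (1 - ν))))
    {x : ℝ} (hx : 0 < x) : HasDerivAt Φ (-x ^ (-ν)) x := by
  rcases hΦ with ⟨rfl, hΦ⟩ | ⟨hν, hΦ⟩
  · rw [rpow_neg_one]
    exact (hasDerivAt_log_const_div hvr.ne' hx.ne').congr_of_eventuallyEq
      (eventually_of_mem (Ioi_mem_nhds hx) hΦ)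
  · exact (hasDerivAt_one_sub_rpow_div hν.ne' hx.ne').congr_of_eventuallyEq
      (eventually_of_mem (Ioi_mem_nhds hx) hΦ)

lemma hasDerivAt_deriv_of_eventually_hasDerivAt {f f' : ℝ → ℝ} {f'' x : ℝ}
    (hf : ∀ᶠ y in 𝓝 x, HasDerivAt f (f' y) y) (hf' : HasDerivAt f' f'' x) :
    HasDerivAt (deriv f) f'' x :=
  hf'.congr_of_eventuallyEq (hf.mono fun _ hy => hy.deriv)

section TaitDerivatives

variable {g : ℝ → ℝ} {ν B a b c x : ℝ}

lemma hasDerivAt_mul_add_quadratic (hg : HasDerivAt g (-x ^ (-ν)) x) :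
    HasDerivAt (fun y => B * g y + a * y ^ 2 + b * y + c) (-(B * x ^ (-ν)) + 2 * a * x + b) x := by
  have h := (((hg.const_mul B).add ((hasDerivAt_pow 2 x).const_mul a)).add
    ((hasDerivAt_id x).const_mul b)).add_const c
  refine h.congr_deriv ?_
  norm_num
  ring

lemma hasDerivAt_neg_mul_rpow_add_linear (hx : x ≠ 0) :
    HasDerivAt (fun y => -(B * y ^ (-ν)) + 2 * a * y + b) (B * ν * x ^ (-ν - 1) + 2 * a) x := by
  have h := (((hasDerivAt_rpow_const (p := -ν) (Or.inl hx)).const_mul B).neg.add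
    ((hasDerivAt_id x).const_mul (2 * a))).add_const b
  refine h.congr_deriv ?_
  ring

lemma hasDerivAt_mul_rpow_add_const (hx : x ≠ 0) :
    HasDerivAt (fun y => B * ν * y ^ (-ν - 1) + 2 * a) (-(B * ν * (ν + 1) * x ^ (-ν - 2))) x := by
  have h := ((hasDerivAt_rpow_const (p := -ν - 1) (Or.inl hx)).const_mul (B * ν)).add_const (2 * a)
  rw [show -ν - 1 - 1 = -ν - 2 by ring] at h
  refine h.congr_deriv ?_
  ring

variable {f : ℝ → ℝ} (hg : ∀ x, 0 < x → HasDerivAt g (-x ^ (-ν)) x)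
  (hf : ∀ y, f y = B * g y + a * y ^ 2 + b * y + c)
include hg hf

lemma hasDerivAt_deriv_of_mul_add_quadratic (hx : 0 < x) :
    HasDerivAt (deriv f) (B * ν * x ^ (-ν - 1) + 2 * a) x := by
  obtain rfl : f = _ := funext hf
  exact hasDerivAt_deriv_of_eventually_hasDerivAt
    (eventually_of_mem (Ioi_mem_nhds hx) fun y hy => hasDerivAt_mul_add_quadratic (hg y hy))
    (hasDerivAt_neg_mul_rpow_add_linear hx.ne')

lemma hasDerivAt_deriv_deriv_of_mul_add_quadratic (hx : 0 < x) :
    HasDerivAt (deriv (deriv f)) (-(B * ν * (ν + 1) * x ^ (-ν - 2))) x :=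
  hasDerivAt_deriv_of_eventually_hasDerivAt
    (eventually_of_mem (Ioi_mem_nhds hx) fun _ hy => hasDerivAt_deriv_of_mul_add_quadratic hg hf hy)
    (hasDerivAt_mul_rpow_add_const hx.ne')

end TaitDerivatives

lemma tait_energy_eq_mul_add_quadratic {A B C D vr sr θr er : ℝ} {Φ : ℝ → ℝ}
    {F : ℝ → ℝ → ℝ}
    (hF : ∀ s v : ℝ, F s v = A * (v - vr) + B * Φ v
        + (1 / (2 * C)) * ((s - sr) - D * (v - vr)) ^ 2
        + θr * ((s - sr) - D * (v - vr) + C * θr) + er) (s : ℝ) :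
    ∃ b c : ℝ, ∀ v, F s v = B * Φ v + D ^ 2 / (2 * C) * v ^ 2 + b * v + c :=
  ⟨A - (s - sr + D * vr) * D / C - θr * D,
    -(A * vr) + (s - sr + D * vr) ^ 2 / (2 * C) + θr * (s - sr + D * vr + C * θr) + er,
    fun v => by rw [hF]; ring⟩

lemma fundamental_derivative_eq {B ν v P W : ℝ} (hv : 0 < v) (hP : P ≠ 0) (hW : W ≠ 0) :
    -(v / 2) * (-(B * ν * (ν + 1) * v ^ (-ν - 2)) / W)
      = (ν + 1) / 2 * (ν * B) / (v / P * W * P * v ^ ν) := by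
  have hvν : v ^ (-ν - 2) = (v ^ ν * v ^ 2)⁻¹ := by
    rw [← rpow_natCast, ← rpow_add hv, ← rpow_neg hv.le]
    congr 1
    push_cast
    ring
  rw [hvν]
  field_simp

/-- for the Tait-type EOS with `B = K_r v_r^ν`, the fundamental derivative
satisfies `𝒢 = ((ν+1)/2) ν K_r v_r^ν / (γ P v^ν)` and is positive whenever `P > 0`. -/
theorem tait_fundamental_derivative
    (A C D Kr vr sr θr er ν : ℝ) (hKr : 0 < Kr) (hC : 0 < C) (hν : 1 ≤ ν) (hvr : 0 < vr)
    (Φ : ℝ → ℝ)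
    (hΦ : (ν = 1 ∧ ∀ v : ℝ, 0 < v → Φ v = Real.log (vr / v)) ∨
          (1 < ν ∧ ∀ v : ℝ, 0 < v →
            Φ v = (1 / (1 - ν)) * (vr ^ (1 - ν) - v ^ (1 - ν))))
    (F : ℝ → ℝ → ℝ)
    (hF : ∀ s v : ℝ, F s v = A * (v - vr) + (Kr * vr ^ ν) * Φ v
        + (1 / (2 * C)) * ((s - sr) - D * (v - vr)) ^ 2
        + θr * ((s - sr) - D * (v - vr) + C * θr) + er) :
    ∀ s v : ℝ, 0 < v →
      let P := -(deriv (fun x => F s x) v)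
      let Fvv := deriv (fun x => deriv (fun y => F s y) x) v
      let Fvvv := deriv (fun x => deriv (fun y => deriv (fun z => F s z) y) x) v
      let γ := v / P * Fvv
      let 𝒢 := -(v / 2) * (Fvvv / Fvv)
      0 < P →
        𝒢 = (ν + 1) / 2 * (ν * Kr * vr ^ ν) / (γ * P * v ^ ν) ∧ 0 < 𝒢 := by
  intro s v hv
  dsimp only
  intro hP
  obtain ⟨b, c, hFs⟩ := tait_energy_eq_mul_add_quadratic hF s
  have hΦ' := fun x (hx : 0 < x) => hasDerivAt_tait_potential hvr hΦ hx
  rw [(hasDerivAt_deriv_of_mul_add_quadratic hΦ' hFs hv).deriv,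
    (hasDerivAt_deriv_deriv_of_mul_add_quadratic hΦ' hFs hv).deriv]
  have hν0 : 0 < ν := by linarith
  have hFvv : 0 < Kr * vr ^ ν * ν * v ^ (-ν - 1) + 2 * (D ^ 2 / (2 * C)) := by positivity
  refine ⟨?_, ?_⟩
  · rw [mul_assoc ν]
    exact fundamental_derivative_eq hv hP.ne' hFvv.ne'
  · rw [neg_div, neg_mul_neg]
    positivity
end

section
/- For the polytropic gas, the function q(ρ, m, E) = ρ·(s₀ - s) with s = log(P/(cρ^{γ₀})) and P = (γ₀-1)(E - m²/(2ρ)), defined on {ρ > 0, E - m²/(2ρ) > 0}, is convex in (ρ, m, E) for any constant s₀ and any γ₀ > 1, c > 0. -/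
open Real

lemma claimA (a b m1 m2 r1 r2 : ℝ) (ha : 0 ≤ a) (hb : 0 ≤ b) (hab : a + b = 1)
    (h1 : 0 < r1) (h2 : 0 < r2) :
    (a*m1 + b*m2)^2 / (2*(a*r1 + b*r2)) ≤ a*(m1^2/(2*r1)) + b*(m2^2/(2*r2)) := by
  have hR : 0 < a*r1 + b*r2 := by
    rcases ha.eq_or_lt with h|h
    · nlinarith
    · nlinarith [mul_pos h h1, mul_nonneg hb h2.le]
  have key : (a*m1 + b*m2)^2 * (r1*r2) ≤ (a*r1 + b*r2) * (a*m1^2*r2 + b*m2^2*r1) := by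
    nlinarith [mul_nonneg (mul_nonneg ha hb) (sq_nonneg (m1*r2 - m2*r1))]
  have e : a*(m1^2/(2*r1)) + b*(m2^2/(2*r2)) = (a*m1^2*r2 + b*m2^2*r1) / (2*(r1*r2)) := by
    field_simp
  rw [e, div_le_div_iff₀ (by positivity) (by positivity)]
  nlinarith

lemma jensenJ (a b r1 r2 t1 t2 : ℝ) (ha : 0 ≤ a) (hb : 0 ≤ b) (hab : a + b = 1)
    (h1 : 0 < r1) (h2 : 0 < r2) (ht1 : 0 < t1) (ht2 : 0 < t2) :
    a*r1*log t1 + b*r2*log t2 ≤ (a*r1 + b*r2) * log ((a*r1*t1 + b*r2*t2)/(a*r1 + b*r2)) := by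
  have hR : 0 < a*r1 + b*r2 := by
    rcases ha.eq_or_lt with h|h
    · nlinarith
    · nlinarith [mul_pos h h1, mul_nonneg hb h2.le]
  have hcc := strictConcaveOn_log_Ioi.concaveOn
  have h := hcc.2 (Set.mem_Ioi.mpr ht1) (Set.mem_Ioi.mpr ht2)
    (div_nonneg (mul_nonneg ha h1.le) hR.le) (div_nonneg (mul_nonneg hb h2.le) hR.le)
    (by field_simp)
  simp only [smul_eq_mul] at h
  have harg : a*r1/(a*r1+b*r2) * t1 + b*r2/(a*r1+b*r2) * t2
      = (a*r1*t1 + b*r2*t2)/(a*r1+b*r2) := by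
    field_simp
  rw [harg] at h
  have h2' := mul_le_mul_of_nonneg_left h hR.le
  calc a*r1*log t1 + b*r2*log t2
      = (a*r1+b*r2) * (a*r1/(a*r1+b*r2) * log t1 + b*r2/(a*r1+b*r2) * log t2) := by
        field_simp
    _ ≤ (a*r1+b*r2) * log ((a*r1*t1 + b*r2*t2)/(a*r1+b*r2)) := h2'

set_option maxHeartbeats 1000000 in
/-- for the polytropic gas, `q(ρ,m,E) = ρ(s₀ - s)` with
`s = log(P/(cρ^{γ₀}))`, `P = (γ₀-1)(E - m²/(2ρ))`, is convex on
`{ρ > 0, E - m²/(2ρ) > 0}`. -/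
theorem polytropic_q_convex (γ₀ c s₀ : ℝ) (hγ₀ : 1 < γ₀) (hc : 0 < c) :
    ConvexOn ℝ {p : ℝ × ℝ × ℝ | 0 < p.1 ∧ 0 < p.2.2 - p.2.1 ^ 2 / (2 * p.1)}
      (fun p => p.1 * (s₀ -
        Real.log ((γ₀ - 1) * (p.2.2 - p.2.1 ^ 2 / (2 * p.1)) / (c * p.1 ^ γ₀)))) := by
  have hform : ∀ r u : ℝ, 0 < r → 0 < u →
      r * (s₀ - Real.log ((γ₀ - 1) * u / (c * r ^ γ₀)))
        = r * (s₀ - log (γ₀ - 1) + log c) + γ₀ * (r * log r) - r * log u := by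
    intro r u hr hu
    rw [Real.log_div (mul_ne_zero (by linarith) hu.ne') (by positivity),
      Real.log_mul (by linarith) hu.ne', Real.log_mul hc.ne' (by positivity),
      Real.log_rpow hr]
    ring
  constructor
  · -- convexity of the domain
    intro x hx y hy a b ha hb hab
    obtain ⟨hx1, hx2⟩ := hx
    obtain ⟨hy1, hy2⟩ := hy
    have hRz : 0 < a*x.1 + b*y.1 := by
      rcases ha.eq_or_lt with h|h
      · nlinarith
      · nlinarith [mul_pos h hx1, mul_nonneg hb hy1.le]
    have hA := claimA a b x.2.1 y.2.1 x.1 y.1 ha hb hab hx1 hy1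
    have hsum : 0 < a*(x.2.2 - x.2.1^2/(2*x.1)) + b*(y.2.2 - y.2.1^2/(2*y.1)) := by
      rcases ha.eq_or_lt with h|h
      · nlinarith
      · nlinarith [mul_pos h hx2, mul_nonneg hb hy2.le]
    refine ⟨by simpa using hRz, ?_⟩
    simp only [Prod.fst_add, Prod.snd_add, Prod.smul_fst, Prod.smul_snd, smul_eq_mul]
    nlinarith [hA]
  · intro x hx y hy a b ha hb hab
    obtain ⟨hx1, hx2⟩ := hx
    obtain ⟨hy1, hy2⟩ := hy
    have hRz : 0 < a*x.1 + b*y.1 := by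
      rcases ha.eq_or_lt with h|h
      · nlinarith
      · nlinarith [mul_pos h hx1, mul_nonneg hb hy1.le]
    have hA := claimA a b x.2.1 y.2.1 x.1 y.1 ha hb hab hx1 hy1
    have hsum : 0 < a*(x.2.2 - x.2.1^2/(2*x.1)) + b*(y.2.2 - y.2.1^2/(2*y.1)) := by
      rcases ha.eq_or_lt with h|h
      · nlinarith
      · nlinarith [mul_pos h hx2, mul_nonneg hb hy2.le]
    have huz : 0 < (a*x.2.2 + b*y.2.2) - (a*x.2.1 + b*y.2.1)^2/(2*(a*x.1 + b*y.1)) := by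
      nlinarith [hA]
    simp only [Prod.fst_add, Prod.snd_add, Prod.smul_fst, Prod.smul_snd, smul_eq_mul]
    rw [hform (a*x.1 + b*y.1) _ hRz (by
        simpa using huz),
      hform x.1 _ hx1 hx2, hform y.1 _ hy1 hy2]
    set u1 := x.2.2 - x.2.1^2/(2*x.1) with hu1def
    set u2 := y.2.2 - y.2.1^2/(2*y.1) with hu2def
    -- Jensen for ρ log ρ
    have J1 := jensenJ a b x.1 y.1 x.1⁻¹ y.1⁻¹ ha hb hab hx1 hy1
      (inv_pos.mpr hx1) (inv_pos.mpr hy1)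
    have e1 : a*x.1*x.1⁻¹ + b*y.1*y.1⁻¹ = 1 := by
      field_simp
      linarith
    rw [Real.log_inv, Real.log_inv, e1, one_div, Real.log_inv] at J1
    -- Jensen for -ρ log (u/ρ)
    have J2 := jensenJ a b x.1 y.1 (u1/x.1) (u2/y.1) ha hb hab hx1 hy1
      (div_pos hx2 hx1) (div_pos hy2 hy1)
    have e2 : a*x.1*(u1/x.1) + b*y.1*(u2/y.1) = a*u1 + b*u2 := by
      field_simp
    rw [e2] at J2
    have hmono : (a*x.1 + b*y.1) * log ((a*u1 + b*u2)/(a*x.1 + b*y.1))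
        ≤ (a*x.1 + b*y.1) * log (((a*x.2.2 + b*y.2.2) - (a*x.2.1 + b*y.2.1)^2/(2*(a*x.1 + b*y.1)))/(a*x.1 + b*y.1)) := by
      have harg : (a*u1 + b*u2) ≤ (a*x.2.2 + b*y.2.2) - (a*x.2.1 + b*y.2.1)^2/(2*(a*x.1 + b*y.1)) := by
        rw [hu1def, hu2def]; nlinarith [hA]
      have hlog : log ((a*u1 + b*u2)/(a*x.1 + b*y.1))
          ≤ log (((a*x.2.2 + b*y.2.2) - (a*x.2.1 + b*y.2.1)^2/(2*(a*x.1 + b*y.1)))/(a*x.1 + b*y.1)) :=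
        Real.log_le_log (by positivity) (by gcongr)
      exact mul_le_mul_of_nonneg_left hlog hRz.le
    have J2' := J2.trans hmono
    rw [Real.log_div huz.ne' hRz.ne', Real.log_div hx2.ne' hx1.ne',
      Real.log_div hy2.ne' hy1.ne'] at J2'
    have hP1γ := mul_le_mul_of_nonneg_left (by nlinarith [J1] :
        (a*x.1 + b*y.1) * log (a*x.1 + b*y.1) ≤ a*(x.1*log x.1) + b*(y.1*log y.1))
      (by linarith : (0:ℝ) ≤ γ₀ - 1)
    nlinarith [hP1γ, J2']
end

section
/- Let F : ℝ × (0,∞) → ℝ be C³ with F convex, P := -F_v > 0, F_s > 0, and fundamental derivative 𝒢 = -(v/2)F_{vvv}/F_{vv} > 0, so that on each isentrope the map v ↦ P(s,v) is decreasing and convex, and let γ = (v/P)F_{vv} be the adiabatic exponent. If v ↦ P(s,v) is positive, decreasing and convex, and e(s,v) satisfies ∂e/∂v = -P with e > 0, then Pv < 2γe, i.e. Pv/e < 2γ (the Menikoff–Plohr inequality). -/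
open Real Set

/-- Menikoff–Plohr Lemma 4.3: if along an isentrope the pressure
`v ↦ p v` is positive, decreasing and convex on `(0,∞)`, and the internal energy
satisfies `e' = -p` with `e > 0`, then `p v · v / e v < 2γ` where `γ = v(-p'(v))/p v`. -/
theorem menikoff_plohr_inequality
    (p p' e : ℝ → ℝ)
    (hp : ∀ v : ℝ, 0 < v → 0 < p v)
    (hp' : ∀ v : ℝ, 0 < v → HasDerivAt p (p' v) v)
    (hdec : ∀ v : ℝ, 0 < v → p' v < 0)
    (hconv : ConvexOn ℝ (Ioi 0) p)
    (he : ∀ v : ℝ, 0 < v → HasDerivAt e (-(p v)) v)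
    (hepos : ∀ v : ℝ, 0 < v → 0 < e v) :
    ∀ v : ℝ, 0 < v →
      p v * v / e v < 2 * (v * (-(p' v)) / p v) := by
  intro v hv
  set P := p v with hPdef
  set q := -(p' v) with hqdef
  have hP : 0 < P := hp v hv
  have hq : 0 < q := by simpa [hqdef] using neg_pos.mpr (hdec v hv)
  set W := v + P / q with hWdef
  have hvW : v < W := by
    have h0 : 0 < P / q := div_pos hP hq
    rw [hWdef]; linarith
  have hW : 0 < W := hv.trans hvW
  -- key claim: P^2 < 2 * q * e v
  have key : P ^ 2 < 2 * q * e v := by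
    set φ : ℝ → ℝ := fun t => e t - (P * (W - t) + q / 2 * ((t - v) ^ 2 - (W - v) ^ 2)) with hφ
    have hφderiv : ∀ t : ℝ, 0 < t → HasDerivAt φ (-(p t) + P - q * (t - v)) t := by
      intro t ht
      have h1 := (((hasDerivAt_const t W).sub (hasDerivAt_id t)).const_mul P).add
          (((((hasDerivAt_id t).sub_const v).pow 2).sub_const ((W - v) ^ 2)).const_mul (q / 2))
      have h2 := (he t ht).sub h1
      refine h2.congr_deriv ?_
      simp only [id_eq]
      push_cast
      ring
    -- φ is antitone on Icc v W
    have hanti : AntitoneOn φ (Icc v W) := by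
      apply antitoneOn_of_deriv_nonpos (convex_Icc v W)
      · intro t ht
        exact (hφderiv t (lt_of_lt_of_le hv ht.1)).continuousAt.continuousWithinAt
      · intro t ht
        rw [interior_Icc] at ht
        exact ((hφderiv t (hv.trans ht.1)).differentiableAt).differentiableWithinAt
      · intro t ht
        rw [interior_Icc] at ht
        have htpos : 0 < t := hv.trans ht.1
        rw [(hφderiv t htpos).deriv]
        -- need p t ≥ P - q * (t - v), i.e. P + p' v * (t - v) ≤ p t
        have hslope := hconv.le_slope_of_hasDerivAt (mem_Ioi.mpr hv) (mem_Ioi.mpr htpos)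
          ht.1 (hp' v hv)
        rw [slope_def_field] at hslope
        have htv : 0 < t - v := sub_pos.mpr ht.1
        have h2 : p' v * (t - v) ≤ p t - p v := (le_div_iff₀ htv).mp hslope
        have hqt : q * (t - v) = -(p' v * (t - v)) := by rw [hqdef]; ring
        linarith [h2, hqt]
    have h1 : φ W ≤ φ v := hanti (left_mem_Icc.mpr hvW.le) (right_mem_Icc.mpr hvW.le) hvW.le
    have hφW : φ W = e W := by simp only [hφ]; ring
    have hφv : φ v = e v - (P * (W - v) - q / 2 * (W - v) ^ 2) := by simp only [hφ]; ring
    have hWv : W - v = P / q := by rw [hWdef]; ring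
    have heW : 0 < e W := hepos W hW
    rw [hφW, hφv, hWv] at h1
    have hval : P * (P / q) - q / 2 * (P / q) ^ 2 = P ^ 2 / (2 * q) := by
      field_simp; ring
    rw [hval] at h1
    have : P ^ 2 / (2 * q) < e v := by linarith
    calc P ^ 2 = (P ^ 2 / (2 * q)) * (2 * q) := by field_simp
    _ < e v * (2 * q) := by exact mul_lt_mul_of_pos_right this (by positivity)
    _ = 2 * q * e v := by ring
  have hE : 0 < e v := hepos v hv
  have goal' : P * v / e v < 2 * (v * q) / P := by
    rw [div_lt_div_iff₀ hE hP]
    nlinarith [mul_lt_mul_of_pos_left key hv]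
  calc P * v / e v < 2 * (v * q) / P := goal'
  _ = 2 * (v * q / P) := by ring
end
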